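/- arXiv:2604.14729 — 6 statements merged into one kernel-verified Lean document; each statement's English description precedes it below -/
import Mathlib

section
/- For all integers n ≥ 2 and m ≥ 2, one has the identity of integers Σ_{h=1}^{n} (−1)^{h−1} · C(n,h) · C((n−h)(m−1), n−1) = C(n(m−1), n−1), where C(a,b) denotes the binomial coefficient with the convention C(a,b) = 0 whenever a < b. -/
/-!
For `0 ≤ k ≤ n`, `(n-1)! * C((n-k)(m-1), n-1)` is the value at `k` of the polynomial
`x ↦ y (y - 1) ⋯ (y - n + 2)` with `y = (m-1)(n-x)`, of degree `n - 1`. Its `n`-th forward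
difference therefore vanishes, and up to sign that difference is the alternating sum over
`0 ≤ k ≤ n`, whose `k = 0` term is `C(n(m-1), n-1)`.
-/

open Polynomial Finset

lemma neg_one_pow_eq_neg_one_pow_mul_neg_one_pow_sub {R : Type*} [Monoid R] [HasDistribNeg R]
    {k n : ℕ} (h : k ≤ n) : (-1 : R) ^ k = (-1) ^ n * (-1) ^ (n - k) := by
  rw [← pow_add, show n + (n - k) = k + 2 * (n - k) by omega, pow_add, pow_mul, neg_one_sq,
    one_pow, mul_one]

theorem Polynomial.sum_range_neg_one_pow_mul_choose_mul_eval_eq_zero {R : Type*} [CommRing R]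
    {P : R[X]} {n : ℕ} (hP : P.natDegree < n) :
    ∑ k ∈ range (n + 1), (-1 : R) ^ k * n.choose k * P.eval (k : R) = 0 := by
  have h := congr_fun (fwdDiff_iter_eq_zero_of_degree_lt hP) 0
  rw [fwdDiff_iter_eq_sum_shift, Pi.zero_apply] at h
  calc _ = (-1) ^ n * ∑ k ∈ range (n + 1),
          ((-1 : ℤ) ^ (n - k) * n.choose k) • P.eval (0 + k • 1) := by
        rw [mul_sum]
        refine sum_congr rfl fun k hk => ?_
        rw [neg_one_pow_eq_neg_one_pow_mul_neg_one_pow_sub (Nat.lt_succ_iff.mp (mem_range.mp hk)),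
          zero_add, nsmul_one, zsmul_eq_mul]
        push_cast
        ring
    _ = 0 := by rw [h, mul_zero]

section descPochhammer

variable {R : Type*} [CommRing R]

lemma natDegree_descPochhammer_comp_linear_lt [NoZeroDivisors R] [Nontrivial R] (a b : R)
    {n : ℕ} (hn : 1 ≤ n) :
    ((descPochhammer R (n - 1)).comp (C a * (C b - X))).natDegree < n := by
  have hq : (C a * (C b - X)).natDegree ≤ 1 := by compute_degree
  calc _ ≤ (descPochhammer R (n - 1)).natDegree * 1 :=
        natDegree_comp_le.trans (Nat.mul_le_mul_left _ hq)
    _ < n := by rw [descPochhammer_natDegree, mul_one]; omega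

lemma eval_descPochhammer_comp_mul_sub (c d : ℕ) {n k : ℕ} (hk : k ≤ n) :
    ((descPochhammer R d).comp (C (c : R) * (C (n : R) - X))).eval (k : R)
      = d.factorial * ((n - k) * c).choose d := by
  rw [eval_comp, eval_mul, eval_sub, eval_C, eval_C, eval_X, ← Nat.cast_sub hk, ← Nat.cast_mul,
    mul_comm, descPochhammer_eval_eq_descFactorial, Nat.descFactorial_eq_factorial_mul_choose,
    Nat.cast_mul]

end descPochhammer

lemma sum_range_neg_one_pow_mul_choose_mul_choose_eq_zero (c : ℕ) {n : ℕ} (hn : 1 ≤ n) :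
    ∑ k ∈ range (n + 1), (-1 : ℤ) ^ k * n.choose k * ((n - k) * c).choose (n - 1) = 0 := by
  have h := sum_range_neg_one_pow_mul_choose_mul_eval_eq_zero
    (natDegree_descPochhammer_comp_linear_lt (c : ℤ) n hn)
  rw [← mul_right_inj' (Nat.cast_ne_zero.mpr (n - 1).factorial_ne_zero), mul_zero, ← h, mul_sum]
  refine sum_congr rfl fun k hk => ?_
  rw [eval_descPochhammer_comp_mul_sub c (n - 1) (Nat.lt_succ_iff.mp (mem_range.mp hk))]
  ring

theorem stmt_0_general (n m : ℕ) (hn : 2 ≤ n) :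
    ∑ h ∈ Finset.Icc 1 n,
      (-1 : ℤ) ^ (h - 1) * (n.choose h : ℤ) * (((n - h) * (m - 1)).choose (n - 1) : ℤ)
      = ((n * (m - 1)).choose (n - 1) : ℤ) := by
  have h := sum_range_neg_one_pow_mul_choose_mul_choose_eq_zero (m - 1) (by omega : 1 ≤ n)
  rw [range_eq_Ico, sum_eq_sum_Ico_succ_bot (by omega), Ico_add_one_right_eq_Icc] at h
  simp only [pow_zero, Nat.choose_zero_right, Nat.cast_one, one_mul, Nat.sub_zero, zero_add] at h
  rw [eq_neg_of_add_eq_zero_left h, ← sum_neg_distrib]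
  refine sum_congr rfl fun k hk => ?_
  obtain ⟨j, rfl⟩ := Nat.exists_eq_add_of_le' (mem_Icc.mp hk).1
  rw [Nat.add_sub_cancel, pow_succ]
  ring

/-- For all integers `n ≥ 2` and `m ≥ 2`,
`∑_{h=1}^{n} (−1)^{h−1) C(n,h) C((n−h)(m−1), n−1) = C(n(m−1), n−1)`,
where `Nat.choose a b = 0` whenever `a < b`. -/
theorem stmt_0 (n m : ℕ) (hn : 2 ≤ n) (hm : 2 ≤ m) :
    ∑ h ∈ Finset.Icc 1 n,
      (-1 : ℤ) ^ (h - 1) * (n.choose h : ℤ) * (((n - h) * (m - 1)).choose (n - 1) : ℤ)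
      = ((n * (m - 1)).choose (n - 1) : ℤ) :=
  stmt_0_general n m hn
end

section
/- Let f ∈ ℂ[x₁,…,xₙ] be a homogeneous polynomial of degree m and let k ≥ m be an integer. If 𝔪^{k+1} ⊆ J(f), then 𝔪^{k+1} ⊆ 𝔪² · J(f) (as ideals of the polynomial ring ℂ[x₁,…,xₙ]). -/
open MvPolynomial

namespace Stmt1Aux

variable {σ : Type*}

lemma degree_add (a b : σ →₀ ℕ) : Finsupp.degree (a + b) = a.degree + b.degree := by
  simp [Finsupp.degree_eq_weight_one, map_add]

lemma degree_mono {a b : σ →₀ ℕ} (h : a ≤ b) : a.degree ≤ b.degree := by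
  classical
  have hsub : a.support ⊆ b.support := fun i hi => by
    rw [Finsupp.mem_support_iff] at hi ⊢
    have := h i
    omega
  calc Finsupp.degree a = ∑ i ∈ b.support, a i := by
        rw [Finsupp.degree]
        exact Finset.sum_subset hsub (fun i _ hi => by
          simpa [Finsupp.notMem_support_iff] using hi)
    _ ≤ ∑ i ∈ b.support, b i := Finset.sum_le_sum (fun i _ => h i)
    _ = b.degree := rfl

lemma degree_single (i : σ) (k : ℕ) : Finsupp.degree (Finsupp.single i k) = k := by
  classical
  rcases eq_or_ne k 0 with rfl | hk
  · simp [Finsupp.degree]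
  · exact Finsupp.degree_single i k

variable {n : ℕ}

local notation "𝔪" => Ideal.span (Set.range (X : Fin n → MvPolynomial (Fin n) ℂ))

lemma monomial_mem_pow (s : Fin n →₀ ℕ) (c : ℂ) :
    (monomial s c : MvPolynomial (Fin n) ℂ) ∈ 𝔪 ^ s.degree := by
  classical
  induction s using Finsupp.induction with
  | zero => simp
  | single_add i k t hit hk ih =>
    have h1 : (monomial (Finsupp.single i k + t) c : MvPolynomial (Fin n) ℂ) =
        monomial (Finsupp.single i k) 1 * monomial t c := by
      rw [monomial_mul, one_mul]
    rw [h1, degree_add, degree_single, pow_add]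
    exact Ideal.mul_mem_mul (by
      rw [← X_pow_eq_monomial]
      exact Ideal.pow_mem_pow (Ideal.subset_span (Set.mem_range_self i)) k) ih

lemma homogeneous_mem_pow {p : MvPolynomial (Fin n) ℂ} {e j : ℕ}
    (hp : p.IsHomogeneous e) (hj : j ≤ e) : p ∈ 𝔪 ^ j := by
  rw [p.as_sum]
  refine Ideal.sum_mem _ fun s hs => ?_
  have hdeg : s.degree = e := by
    have := hp (MvPolynomial.mem_support_iff.mp hs)
    rw [Finsupp.degree_eq_weight_one]; exact this
  exact Ideal.pow_le_pow_right (hdeg ▸ hj) (monomial_mem_pow s _)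

lemma pow_le_monomial_span (j : ℕ) :
    𝔪 ^ j ≤ Ideal.span ((fun s => (monomial s (1 : ℂ) : MvPolynomial (Fin n) ℂ)) ''
      {s | Finsupp.degree s = j}) := by
  induction j with
  | zero =>
    rw [pow_zero]
    refine fun x _ => ?_
    have h1 : (1 : MvPolynomial (Fin n) ℂ) ∈ Ideal.span ((fun s =>
        (monomial s (1 : ℂ) : MvPolynomial (Fin n) ℂ)) '' {s | Finsupp.degree s = 0}) :=
      Ideal.subset_span ⟨0, by simp, by simp⟩
    simpa using Ideal.mul_mem_left _ x h1
  | succ j ih =>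
    rw [pow_succ]
    have h𝔪 : 𝔪 ≤ Ideal.span ((fun s => (monomial s (1 : ℂ) : MvPolynomial (Fin n) ℂ)) ''
        {s | Finsupp.degree s = 1}) := by
      rw [Ideal.span_le]
      rintro x ⟨i, rfl⟩
      exact Ideal.subset_span ⟨Finsupp.single i 1, by simp [degree_single], rfl⟩
    refine le_trans (Ideal.mul_mono ih h𝔪) ?_
    rw [Ideal.span_mul_span, Ideal.span_le]
    intro x hx
    simp only [Set.mem_mul] at hx
    obtain ⟨a, ⟨sa, hsa, rfl⟩, b, ⟨sb, hsb, rfl⟩, rfl⟩ := hx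
    refine Ideal.subset_span ⟨sa + sb, ?_, ?_⟩
    · simp only [Set.mem_setOf_eq] at hsa hsb ⊢
      rw [degree_add, hsa, hsb]
    · rw [monomial_mul, one_mul]

lemma pderiv_isHomogeneous {f : MvPolynomial (Fin n) ℂ} {m : ℕ}
    (hf : f.IsHomogeneous m) (i : Fin n) : (pderiv i f).IsHomogeneous (m - 1) := by
  classical
  conv_lhs => rw [f.as_sum]
  rw [map_sum]
  rw [← mem_homogeneousSubmodule]
  refine Submodule.sum_mem _ fun s hs => ?_
  rw [mem_homogeneousSubmodule, pderiv_monomial]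
  rcases eq_or_ne (s i) 0 with h0 | h0
  · rw [h0]; simpa using isHomogeneous_zero (Fin n) ℂ (m - 1)
  · refine isHomogeneous_monomial _ ?_
    have hdeg : s.degree = m := by
      have := hf (MvPolynomial.mem_support_iff.mp hs)
      rw [Finsupp.degree_eq_weight_one]; exact this
    have hsum : (s - Finsupp.single i 1) + Finsupp.single i 1 = s := by
      ext j
      simp only [Finsupp.add_apply, Finsupp.tsub_apply, Finsupp.single_apply]
      rcases eq_or_ne i j with rfl | hij
      · simp; omega
      · simp [hij]
    have := degree_add (s - Finsupp.single i 1) (Finsupp.single i 1)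
    rw [hsum, degree_single] at this
    omega

end Stmt1Aux

/-- If `f ∈ ℂ[x₁,…,xₙ]` is homogeneous of degree `m`, `k ≥ m`, and
`𝔪^{k+1} ⊆ J(f)`, then `𝔪^{k+1} ⊆ 𝔪² · J(f)`, where `𝔪 = (x₁,…,xₙ)` and `J(f)` is
the Jacobian ideal of `f`. -/
theorem stmt_1 (n m k : ℕ) (f : MvPolynomial (Fin n) ℂ)
    (hf : MvPolynomial.IsHomogeneous f m) (hk : m ≤ k)
    (h : (Ideal.span (Set.range (X : Fin n → MvPolynomial (Fin n) ℂ))) ^ (k + 1) ≤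
      Ideal.span (Set.range fun i => pderiv i f)) :
    (Ideal.span (Set.range (X : Fin n → MvPolynomial (Fin n) ℂ))) ^ (k + 1) ≤
      (Ideal.span (Set.range (X : Fin n → MvPolynomial (Fin n) ℂ))) ^ 2 *
        Ideal.span (Set.range fun i => pderiv i f) := by
  classical
  rcases Nat.eq_zero_or_pos m with rfl | hm
  · -- degree 0 case: all partial derivatives vanish
    have hker : ∀ i, pderiv i f = 0 := by
      intro i
      conv_lhs => rw [f.as_sum]
      rw [map_sum]
      refine Finset.sum_eq_zero fun s hs => ?_
      have hdeg : s.degree = 0 := by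
        have := hf (MvPolynomial.mem_support_iff.mp hs)
        rw [Finsupp.degree_eq_weight_one]; exact this
      have hs0 : s = 0 := (Finsupp.degree_eq_zero_iff s).mp hdeg
      subst hs0
      simp
    have hJ : Ideal.span (Set.range fun i => pderiv i f) ≤ ⊥ := by
      rw [Ideal.span_le]
      rintro x ⟨i, rfl⟩
      simp [hker i]
    intro p hp
    have hp0 : p = 0 := by simpa using hJ (h hp)
    simp [hp0]
  · intro p hp
    rw [← p.sum_homogeneousComponent]
    refine Ideal.sum_mem _ fun d _ => ?_
    by_cases hq0 : homogeneousComponent d p = 0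
    · rw [hq0]; exact zero_mem _
    obtain ⟨s, hs⟩ := Finset.nonempty_iff_ne_empty.mpr
      (fun hh => hq0 (MvPolynomial.support_eq_empty.mp hh))
    have hcs := MvPolynomial.mem_support_iff.mp hs
    rw [coeff_homogeneousComponent] at hcs
    split_ifs at hcs with hds
    · have hsp : s ∈ p.support := MvPolynomial.mem_support_iff.mpr hcs
      have hmem := Stmt1Aux.pow_le_monomial_span (n := n) (k + 1) hp
      rw [mem_ideal_span_monomial_image] at hmem
      obtain ⟨si, hsi, hle⟩ := hmem s hsp
      have hmono := Stmt1Aux.degree_mono hle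
      have hd : k + 1 ≤ d := by
        simp only [Set.mem_setOf_eq] at hsi
        omega
      set q := homogeneousComponent d p with hqdef
      have hq : q.IsHomogeneous d := homogeneousComponent_isHomogeneous d p
      have hqJ : q ∈ Ideal.span (Set.range fun i => pderiv i f) :=
        h (Stmt1Aux.homogeneous_mem_pow hq hd)
      obtain ⟨c, hc⟩ := (Submodule.mem_span_range_iff_exists_fun _).mp hqJ
      have hqq : homogeneousComponent d q = q := by
        rw [homogeneousComponent_of_mem ((mem_homogeneousSubmodule d q).mpr hq), if_pos rfl]
      have hqe : q = ∑ i, homogeneousComponent d (c i * pderiv i f) := by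
        rw [← hqq]
        conv_lhs => rw [← hc]
        simp only [smul_eq_mul, map_sum]
      rw [hqe]
      refine Ideal.sum_mem _ fun i _ => ?_
      have hgi : (pderiv i f).IsHomogeneous (m - 1) := Stmt1Aux.pderiv_isHomogeneous hf i
      have hdecomp : c i * pderiv i f =
          ∑ j ∈ Finset.range ((c i).totalDegree + 1),
            homogeneousComponent j (c i) * pderiv i f := by
        rw [← Finset.sum_mul, sum_homogeneousComponent]
      rw [hdecomp, map_sum]
      refine Ideal.sum_mem _ fun j _ => ?_
      have hterm : (homogeneousComponent j (c i) * pderiv i f).IsHomogeneous (j + (m - 1)) :=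
        (homogeneousComponent_isHomogeneous j (c i)).mul hgi
      rw [homogeneousComponent_of_mem ((mem_homogeneousSubmodule _ _).mpr hterm)]
      split_ifs with hdj
      · have hj2 : 2 ≤ j := by omega
        exact Ideal.mul_mem_mul
          (Stmt1Aux.homogeneous_mem_pow (homogeneousComponent_isHomogeneous j (c i)) hj2)
          (Ideal.subset_span ⟨i, rfl⟩)
      · exact zero_mem _
    · exact absurd rfl hcs
end

section
/- Let f ∈ ℂ[x₁,x₂] be a regular homogeneous polynomial of degree 3. Then 𝔪⁴ ⊆ 𝔪² · J(f), where 𝔪 = (x₁,x₂); equivalently, every homogeneous polynomial of degree 4 in ℂ[x₁,x₂] can be written as a·∂f/∂x₁ + b·∂f/∂x₂ with a, b homogeneous of degree 2. -/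
open MvPolynomial Pointwise

lemma CXX (c : ℂ) (i j : ℕ) : C c * (X 0 ^ i * X 1 ^ j : MvPolynomial (Fin 2) ℂ)
    = monomial (Finsupp.single 0 i + Finsupp.single 1 j) c := by
  simp [X_pow_eq_monomial, monomial_mul, C_mul_monomial]

lemma expand_deg3 (f : MvPolynomial (Fin 2) ℂ) (hf : f.IsHomogeneous 3) :
    f = C (coeff (Finsupp.single 0 3) f) * (X 0 ^ 3 * X 1 ^ 0)
      + C (coeff (Finsupp.single 0 2 + Finsupp.single 1 1) f) * (X 0 ^ 2 * X 1 ^ 1)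
      + C (coeff (Finsupp.single 0 1 + Finsupp.single 1 2) f) * (X 0 ^ 1 * X 1 ^ 2)
      + C (coeff (Finsupp.single 1 3) f) * (X 0 ^ 0 * X 1 ^ 3) := by
  classical
  set F : Finset (Fin 2 →₀ ℕ) := {Finsupp.single 0 3, Finsupp.single 0 2 + Finsupp.single 1 1,
    Finsupp.single 0 1 + Finsupp.single 1 2, Finsupp.single 1 3} with hF
  have hsub : f.support ⊆ F := by
    intro v hv
    have h3 := hf (mem_support_iff.mp hv)
    simp only [Finsupp.weight_apply, Pi.one_apply, smul_eq_mul, mul_one] at h3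
    rw [Finsupp.sum_fintype _ _ (fun i => rfl), Fin.sum_univ_two] at h3
    have hv0 : v = Finsupp.single 0 (v 0) + Finsupp.single 1 (v 1) := by
      ext i; fin_cases i <;> simp
    simp only [hF, Finset.mem_insert, Finset.mem_singleton]
    have hcase : v 0 = 3 ∧ v 1 = 0 ∨ v 0 = 2 ∧ v 1 = 1 ∨ v 0 = 1 ∧ v 1 = 2 ∨
        v 0 = 0 ∧ v 1 = 3 := by omega
    rcases hcase with ⟨h1, h2⟩ | ⟨h1, h2⟩ | ⟨h1, h2⟩ | ⟨h1, h2⟩ <;>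
      rw [hv0, h1, h2] <;> simp
  have hsum : f = ∑ v ∈ F, monomial v (coeff v f) :=
    (f.as_sum).trans (Finset.sum_subset hsub (fun v _ hnv => by
      rw [notMem_support_iff.mp hnv, monomial_zero]))
  rw [CXX, CXX, CXX, CXX]
  rw [show Finsupp.single (0:Fin 2) 3 + Finsupp.single 1 0 = Finsupp.single 0 3 by simp,
      show Finsupp.single (0:Fin 2) 0 + Finsupp.single 1 3 = Finsupp.single 1 3 by simp]
  conv_lhs => rw [hsum, hF]
  rw [Finset.sum_insert (by simp [Finsupp.ext_iff, Fin.forall_fin_two]),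
      Finset.sum_insert (by simp [Finsupp.ext_iff, Fin.forall_fin_two]),
      Finset.sum_insert (by simp [Finsupp.ext_iff, Fin.forall_fin_two]),
      Finset.sum_singleton]
  ring

lemma common_root (a b c d e k : ℂ) (ha : a ≠ 0)
    (hR : c^2*d^2 - b*c*d*e + b^2*d*k + a*c*e^2 - 2*a*c*d*k - a*b*e*k + a^2*k^2 = 0) :
    ∃ u : ℂ, a*u^2 + b*u + c = 0 ∧ d*u^2 + e*u + k = 0 := by
  obtain ⟨w, hw⟩ := IsAlgClosed.exists_pow_nat_eq (b^2 - 4*a*c) (n := 2) (by norm_num)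
  set r : ℂ := (-b + w)/(2*a) with hr
  set s : ℂ := (-b - w)/(2*a) with hs
  have h2 : (2:ℂ) * a ≠ 0 := by simp [ha]
  have hra : a*r^2 + b*r + c = 0 := by
    rw [hr]; field_simp; linear_combination hw
  have hsa : a*s^2 + b*s + c = 0 := by
    rw [hs]; field_simp; linear_combination hw
  have hk1 : d*r^2 + e*r + k = (d*(-b+w)^2 + 2*a*e*(-b+w) + 4*a^2*k)/(4*a^2) := by
    rw [hr]; field_simp; ring
  have hk2 : d*s^2 + e*s + k = (d*(-b-w)^2 + 2*a*e*(-b-w) + 4*a^2*k)/(4*a^2) := by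
    rw [hs]; field_simp; ring
  have hN : (d*(-b+w)^2 + 2*a*e*(-b+w) + 4*a^2*k) * (d*(-b-w)^2 + 2*a*e*(-b-w) + 4*a^2*k)
      = 16*a^2*(c^2*d^2 - b*c*d*e + b^2*d*k + a*c*e^2 - 2*a*c*d*k - a*b*e*k + a^2*k^2) := by
    linear_combination (d*(2*(d*b^2 - 2*a*b*e + 4*a^2*k) + d*w^2 + d*(b^2-4*a*c)) -
      (2*a*e - 2*b*d)^2) * hw
  have hprod : (d*r^2 + e*r + k) * (d*s^2 + e*s + k) = 0 := by
    rw [hk1, hk2, div_mul_div_comm, hN, hR]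
    simp
  rcases mul_eq_zero.mp hprod with h | h
  · exact ⟨r, hra, h⟩
  · exact ⟨s, hsa, h⟩

lemma res_ne_zero (a b c d e k : ℂ)
    (h : ∀ u v : ℂ, a*u^2 + b*(u*v) + c*v^2 = 0 → d*u^2 + e*(u*v) + k*v^2 = 0 → u = 0 ∧ v = 0) :
    c^2*d^2 - b*c*d*e + b^2*d*k + a*c*e^2 - 2*a*c*d*k - a*b*e*k + a^2*k^2 ≠ 0 := by
  intro hR
  by_cases ha : a = 0
  · by_cases hd : d = 0
    · exact one_ne_zero (h 1 0 (by rw [ha]; ring) (by rw [hd]; ring)).1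
    · obtain ⟨u, h1, h2⟩ := common_root d e k a b c hd (by linear_combination hR)
      exact one_ne_zero (h u 1 (by linear_combination h2) (by linear_combination h1)).2
  · obtain ⟨u, h1, h2⟩ := common_root a b c d e k ha hR
    exact one_ne_zero (h u 1 (by linear_combination h1) (by linear_combination h2)).2

lemma mem_IJ {I J : Ideal (MvPolynomial (Fin 2) ℂ)}
    (hX0 : (X 0 : MvPolynomial (Fin 2) ℂ) ∈ I) (hX1 : (X 1 : MvPolynomial (Fin 2) ℂ) ∈ I)
    {g h p : MvPolynomial (Fin 2) ℂ} (hg : g ∈ J) (hh : h ∈ J) {R A1 A2 B1 B2 : ℂ} (hR : R ≠ 0)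
    (key : C R * p = (C A1 * X 0 + C A2 * X 1) * g + (C B1 * X 0 + C B2 * X 1) * h) :
    p ∈ I * J := by
  have hp : p = (C R⁻¹ * (C A1 * X 0 + C A2 * X 1)) * g
      + (C R⁻¹ * (C B1 * X 0 + C B2 * X 1)) * h := by
    have h1 : p = C R⁻¹ * (C R * p) := by
      rw [← mul_assoc, ← C_mul, inv_mul_cancel₀ hR, C_1, one_mul]
    rw [h1, key]; ring
  rw [hp]
  exact add_mem
    (Ideal.mul_mem_mul (Ideal.mul_mem_left _ _
      (add_mem (Ideal.mul_mem_left _ _ hX0) (Ideal.mul_mem_left _ _ hX1))) hg)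
    (Ideal.mul_mem_mul (Ideal.mul_mem_left _ _
      (add_mem (Ideal.mul_mem_left _ _ hX0) (Ideal.mul_mem_left _ _ hX1))) hh)


/-- If `f ∈ ℂ[x₁,x₂]` is a regular homogeneous polynomial of degree `3`,
then `𝔪⁴ ⊆ 𝔪² · J(f)`, where `𝔪 = (x₁,x₂)` and `J(f)` is the Jacobian ideal of `f`. -/
theorem stmt_4 (f : MvPolynomial (Fin 2) ℂ)
    (hf : MvPolynomial.IsHomogeneous f 3)
    (hreg : ∀ x : Fin 2 → ℂ, (∀ i, eval x (pderiv i f) = 0) → x = 0) :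
    (Ideal.span (Set.range (X : Fin 2 → MvPolynomial (Fin 2) ℂ))) ^ 4 ≤
      (Ideal.span (Set.range (X : Fin 2 → MvPolynomial (Fin 2) ℂ))) ^ 2 *
        Ideal.span (Set.range fun i => pderiv i f) := by
  classical
  set I : Ideal (MvPolynomial (Fin 2) ℂ) := Ideal.span (Set.range X) with hI
  set J : Ideal (MvPolynomial (Fin 2) ℂ) :=
    Ideal.span (Set.range fun i => pderiv i f) with hJ
  have hX0 : (X 0 : MvPolynomial (Fin 2) ℂ) ∈ I := Ideal.subset_span ⟨0, rfl⟩
  have hX1 : (X 1 : MvPolynomial (Fin 2) ℂ) ∈ I := Ideal.subset_span ⟨1, rfl⟩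
  have hgJ : pderiv 0 f ∈ J := Ideal.subset_span ⟨0, rfl⟩
  have hhJ : pderiv 1 f ∈ J := Ideal.subset_span ⟨1, rfl⟩
  obtain ⟨a, b, c, hg⟩ : ∃ a b c : ℂ,
      pderiv 0 f = C a * X 0 ^ 2 + C b * (X 0 * X 1) + C c * X 1 ^ 2 := by
    refine ⟨3 * coeff (Finsupp.single 0 3) f,
      2 * coeff (Finsupp.single 0 2 + Finsupp.single 1 1) f,
      coeff (Finsupp.single 0 1 + Finsupp.single 1 2) f, ?_⟩
    conv_lhs => rw [expand_deg3 f hf]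
    simp only [map_add, pderiv_C_mul, pderiv_mul, pderiv_pow, pderiv_X_self,
      pderiv_X_of_ne (show (1:Fin 2) ≠ 0 by decide),
      pderiv_X_of_ne (show (0:Fin 2) ≠ 1 by decide), pderiv_C,
      map_ofNat, map_mul, C_mul]
    push_cast
    ring
  obtain ⟨d, e, k, hh⟩ : ∃ d e k : ℂ,
      pderiv 1 f = C d * X 0 ^ 2 + C e * (X 0 * X 1) + C k * X 1 ^ 2 := by
    refine ⟨coeff (Finsupp.single 0 2 + Finsupp.single 1 1) f,
      2 * coeff (Finsupp.single 0 1 + Finsupp.single 1 2) f,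
      3 * coeff (Finsupp.single 1 3) f, ?_⟩
    conv_lhs => rw [expand_deg3 f hf]
    simp only [map_add, pderiv_C_mul, pderiv_mul, pderiv_pow, pderiv_X_self,
      pderiv_X_of_ne (show (1:Fin 2) ≠ 0 by decide),
      pderiv_X_of_ne (show (0:Fin 2) ≠ 1 by decide), pderiv_C,
      map_ofNat, map_mul, C_mul]
    push_cast
    ring
  -- transfer regularity
  have hcom : ∀ u v : ℂ, a*u^2 + b*(u*v) + c*v^2 = 0 → d*u^2 + e*(u*v) + k*v^2 = 0 →
      u = 0 ∧ v = 0 := by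
    intro u v h1 h2
    have h0 : (![u, v] : Fin 2 → ℂ) = 0 := by
      apply hreg
      have e0 : eval ![u, v] (pderiv 0 f) = 0 := by rw [hg]; simp; linear_combination h1
      have e1 : eval ![u, v] (pderiv 1 f) = 0 := by rw [hh]; simp; linear_combination h2
      intro i
      fin_cases i
      · exact e0
      · exact e1
    constructor
    · have := congrFun h0 0; simpa using this
    · have := congrFun h0 1; simpa using this
  have hRne : c^2*d^2 - b*c*d*e + b^2*d*k + a*c*e^2 - 2*a*c*d*k - a*b*e*k + a^2*k^2 ≠ 0 :=
    res_ne_zero a b c d e k hcom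
  -- the four key identities
  have key0 : C (c^2*d^2 - b*c*d*e + b^2*d*k + a*c*e^2 - 2*a*c*d*k - a*b*e*k + a^2*k^2)
      * (X 0 ^ 3 : MvPolynomial (Fin 2) ℂ)
      = (C (c*e^2 - c*d*k - b*e*k + a*k^2) * X 0 + C (c*e*k - b*k^2) * X 1) * pderiv 0 f
        + (C (c^2*d - b*c*e + b^2*k - a*c*k) * X 0 + C (-(c^2*e) + b*c*k) * X 1)
          * pderiv 1 f := by
    rw [hg, hh]
    simp only [map_add, map_sub, map_mul, map_pow, map_ofNat, map_neg]
    ring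
  have key1 : C (c^2*d^2 - b*c*d*e + b^2*d*k + a*c*e^2 - 2*a*c*d*k - a*b*e*k + a^2*k^2)
      * (X 0 ^ 2 * X 1 : MvPolynomial (Fin 2) ℂ)
      = (C (-(c*d*e) + b*d*k) * X 0 + C (-(c*d*k) + a*k^2) * X 1) * pderiv 0 f
        + (C (a*c*e - a*b*k) * X 0 + C (c^2*d - a*c*k) * X 1) * pderiv 1 f := by
    rw [hg, hh]
    simp only [map_add, map_sub, map_mul, map_pow, map_ofNat, map_neg]
    ring
  have key2 : C (c^2*d^2 - b*c*d*e + b^2*d*k + a*c*e^2 - 2*a*c*d*k - a*b*e*k + a^2*k^2)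
      * (X 0 * X 1 ^ 2 : MvPolynomial (Fin 2) ℂ)
      = (C (c*d^2 - a*d*k) * X 0 + C (b*d*k - a*e*k) * X 1) * pderiv 0 f
        + (C (-(a*c*d) + a^2*k) * X 0 + C (-(b*c*d) + a*c*e) * X 1) * pderiv 1 f := by
    rw [hg, hh]
    simp only [map_add, map_sub, map_mul, map_pow, map_ofNat, map_neg]
    ring
  have key3 : C (c^2*d^2 - b*c*d*e + b^2*d*k + a*c*e^2 - 2*a*c*d*k - a*b*e*k + a^2*k^2)
      * (X 1 ^ 3 : MvPolynomial (Fin 2) ℂ)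
      = (C (-(b*d^2) + a*d*e) * X 0 + C (c*d^2 - b*d*e + a*e^2 - a*d*k) * X 1) * pderiv 0 f
        + (C (a*b*d - a^2*e) * X 0 + C (b^2*d - a*c*d - a*b*e + a^2*k) * X 1)
          * pderiv 1 f := by
    rw [hg, hh]
    simp only [map_add, map_sub, map_mul, map_pow, map_ofNat, map_neg]
    ring
  have hx3 : (X 0 ^ 3 : MvPolynomial (Fin 2) ℂ) ∈ I * J := mem_IJ hX0 hX1 hgJ hhJ hRne key0
  have hx2y : (X 0 ^ 2 * X 1 : MvPolynomial (Fin 2) ℂ) ∈ I * J :=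
    mem_IJ hX0 hX1 hgJ hhJ hRne key1
  have hxy2 : (X 0 * X 1 ^ 2 : MvPolynomial (Fin 2) ℂ) ∈ I * J :=
    mem_IJ hX0 hX1 hgJ hhJ hRne key2
  have hy3 : (X 1 ^ 3 : MvPolynomial (Fin 2) ℂ) ∈ I * J := mem_IJ hX0 hX1 hgJ hhJ hRne key3
  -- I^3 ≤ I * J
  have hrange : (Set.range (X : Fin 2 → MvPolynomial (Fin 2) ℂ))
      = {X 0, X 1} := by
    ext p
    simp [Fin.exists_fin_two, eq_comm]
  have h3 : I ^ 3 = Ideal.span (({X 0, X 1} : Set (MvPolynomial (Fin 2) ℂ))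
      * {X 0, X 1} * {X 0, X 1}) := by
    rw [hI, hrange, pow_succ, pow_two, Ideal.span_mul_span', Ideal.span_mul_span']
  have h3le : I ^ 3 ≤ I * J := by
    rw [h3, Ideal.span_le]
    intro p hp
    simp only [Set.mem_mul, Set.mem_insert_iff, Set.mem_singleton_iff] at hp
    obtain ⟨q, ⟨x, hx, y, hy, rfl⟩, z, hz, rfl⟩ := hp
    rcases hx with rfl | rfl <;> rcases hy with rfl | rfl <;> rcases hz with rfl | rfl
    · rw [show (X 0 * X 0 * X 0 : MvPolynomial (Fin 2) ℂ) = X 0 ^ 3 by ring]; exact hx3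
    · rw [show (X 0 * X 0 * X 1 : MvPolynomial (Fin 2) ℂ) = X 0 ^ 2 * X 1 by ring]; exact hx2y
    · rw [show (X 0 * X 1 * X 0 : MvPolynomial (Fin 2) ℂ) = X 0 ^ 2 * X 1 by ring]; exact hx2y
    · rw [show (X 0 * X 1 * X 1 : MvPolynomial (Fin 2) ℂ) = X 0 * X 1 ^ 2 by ring]; exact hxy2
    · rw [show (X 1 * X 0 * X 0 : MvPolynomial (Fin 2) ℂ) = X 0 ^ 2 * X 1 by ring]; exact hx2y
    · rw [show (X 1 * X 0 * X 1 : MvPolynomial (Fin 2) ℂ) = X 0 * X 1 ^ 2 by ring]; exact hxy2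
    · rw [show (X 1 * X 1 * X 0 : MvPolynomial (Fin 2) ℂ) = X 0 * X 1 ^ 2 by ring]; exact hxy2
    · rw [show (X 1 * X 1 * X 1 : MvPolynomial (Fin 2) ℂ) = X 1 ^ 3 by ring]; exact hy3
  calc I ^ 4 = I ^ 3 * I := pow_succ I 3
    _ ≤ (I * J) * I := Ideal.mul_mono_left h3le
    _ = I ^ 2 * J := by ring
end

section
/- Let f ∈ ℂ[x₁,x₂] be a regular homogeneous polynomial of degree 3, viewed as an element of ℂ⟦x₁,x₂⟧. Then f is formally 3-determined: for every formal power series g ∈ ℂ⟦x₁,x₂⟧ such that g − f has order at least 4, there exists a ℂ-algebra automorphism φ of ℂ⟦x₁,x₂⟧ with φ(f) = g. (In particular, every plane curve germ with an ordinary triple point is formally equivalent to its tangent cone.) -/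
noncomputable section
section LA
open Polynomial
namespace Stmt5LA

variable {p0 p1 p2 q0 q1 q2 : ℂ}

def M (p0 p1 p2 q0 q1 q2 : ℂ) : Matrix (Fin 4) (Fin 4) ℂ :=
  !![p0, 0, q0, 0; p1, p0, q1, q0; p2, p1, q2, q1; 0, p2, 0, q2]

section
variable (HP : ¬(p0 = 0 ∧ q0 = 0))
  (Hroot : ∀ z : ℂ, p0*z^2 + p1*z + p2 = 0 → q0*z^2 + q1*z + q2 = 0 → False)
include HP Hroot

lemma Pne : ¬(p0 = 0 ∧ p1 = 0 ∧ p2 = 0) := by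
  rintro ⟨h0, h1, h2⟩
  have hq0 : q0 ≠ 0 := fun h => HP ⟨h0, h⟩
  set Q : ℂ[X] := C q2 + C q1 * X + C q0 * X^2 with hQ
  have hdeg : 0 < Q.degree := by
    have h2 : Q.natDegree = 2 := by
      have hle : Q.natDegree ≤ 2 := by rw [hQ]; compute_degree
      have hc : Q.coeff 2 = q0 := by rw [hQ]; simp
      have := le_natDegree_of_ne_zero (n := 2) (by rw [hc]; exact hq0)
      omega
    rw [degree_eq_natDegree (fun h => by simp [h] at h2), h2]
    norm_num
  obtain ⟨z, hz⟩ := Complex.exists_root hdeg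
  refine Hroot z (by rw [h0, h1, h2]; ring) ?_
  have := hz
  rw [hQ] at this
  simp only [IsRoot, eval_add, eval_mul, eval_C, eval_X, eval_pow] at this
  linear_combination this

lemma Qne : ¬(q0 = 0 ∧ q1 = 0 ∧ q2 = 0) := by
  rintro ⟨h0, h1, h2⟩
  have hp0 : p0 ≠ 0 := fun h => HP ⟨h, h0⟩
  set P : ℂ[X] := C p2 + C p1 * X + C p0 * X^2 with hP
  have hdeg : 0 < P.degree := by
    have h2' : P.natDegree = 2 := by
      have hle : P.natDegree ≤ 2 := by rw [hP]; compute_degree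
      have hc : P.coeff 2 = p0 := by rw [hP]; simp
      have := le_natDegree_of_ne_zero (n := 2) (by rw [hc]; exact hp0)
      omega
    rw [degree_eq_natDegree (fun h => by simp [h] at h2'), h2']
    norm_num
  obtain ⟨z, hz⟩ := Complex.exists_root hdeg
  refine Hroot z ?_ (by rw [h0, h1, h2]; ring)
  have := hz
  rw [hP] at this
  simp only [IsRoot, eval_add, eval_mul, eval_C, eval_X, eval_pow] at this
  linear_combination this

lemma M_inj : ∀ x : Fin 4 → ℂ, (M p0 p1 p2 q0 q1 q2).mulVec x = 0 → x = 0 := by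
  intro x hx
  set P : ℂ[X] := C p2 + C p1 * X + C p0 * X^2 with hP
  set Q : ℂ[X] := C q2 + C q1 * X + C q0 * X^2 with hQ
  set L1 : ℂ[X] := C (x 1) + C (x 0) * X with hL1
  set L2 : ℂ[X] := C (x 3) + C (x 2) * X with hL2
  have e0 := congrFun hx 0
  have e1 := congrFun hx 1
  have e2 := congrFun hx 2
  have e3 := congrFun hx 3
  simp [M, Matrix.mulVec, dotProduct, Fin.sum_univ_four] at e0 e1 e2 e3
  have key : L1 * P + L2 * Q = 0 := by
    have expand : L1 * P + L2 * Q =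
        C (x 0 * p0 + x 2 * q0) * X^3 + C (x 0 * p1 + x 1 * p0 + x 2 * q1 + x 3 * q0) * X^2
          + C (x 0 * p2 + x 1 * p1 + x 2 * q2 + x 3 * q1) * X
          + C (x 1 * p2 + x 3 * q2) := by
      rw [hL1, hL2, hP, hQ]
      simp only [map_add, map_mul]
      ring
    rw [expand]
    rw [show x 0 * p0 + x 2 * q0 = 0 by linear_combination e0,
      show x 0 * p1 + x 1 * p0 + x 2 * q1 + x 3 * q0 = 0 by linear_combination e1,
      show x 0 * p2 + x 1 * p1 + x 2 * q2 + x 3 * q1 = 0 by linear_combination e2,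
      show x 1 * p2 + x 3 * q2 = 0 by linear_combination e3]
    simp
  have hcop : IsCoprime P Q := by
    rw [Polynomial.isCoprime_iff_aeval_ne_zero_of_isAlgClosed (k := ℂ) ℂ P Q]
    intro a
    by_contra hcon
    push_neg at hcon
    obtain ⟨hPa, hQa⟩ := hcon
    rw [hP] at hPa; rw [hQ] at hQa
    simp only [map_add, map_mul, aeval_C, aeval_X, map_pow, Algebra.algebraMap_self_apply] at hPa hQa
    refine Hroot a (by linear_combination hPa) (by linear_combination hQa)
  have hPne : P ≠ 0 := by
    intro h
    refine Pne HP Hroot ⟨?_, ?_, ?_⟩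
    · have := congrArg (fun r => Polynomial.coeff r 2) h; rw [hP] at this; simpa using this
    · have := congrArg (fun r => Polynomial.coeff r 1) h; rw [hP] at this; simpa using this
    · have := congrArg (fun r => Polynomial.coeff r 0) h; rw [hP] at this; simpa using this
  have hQne : Q ≠ 0 := by
    intro h
    refine Qne HP Hroot ⟨?_, ?_, ?_⟩
    · have := congrArg (fun r => Polynomial.coeff r 2) h; rw [hQ] at this; simpa using this
    · have := congrArg (fun r => Polynomial.coeff r 1) h; rw [hQ] at this; simpa using this
    · have := congrArg (fun r => Polynomial.coeff r 0) h; rw [hQ] at this; simpa using this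
  have hL2z : L2 = 0 := by
    by_contra hL2ne
    have hdvd : P ∣ L2 * Q := ⟨-L1, by linear_combination key⟩
    have hPL2 : P ∣ L2 := hcop.dvd_of_dvd_mul_right hdvd
    have hdegP : P.natDegree ≤ 1 := le_trans (natDegree_le_of_dvd hPL2 hL2ne)
      (by rw [hL2]; compute_degree)
    have hp0 : p0 = 0 := by
      have := coeff_eq_zero_of_natDegree_lt (lt_of_le_of_lt hdegP (by norm_num : (1:ℕ) < 2))
      rw [hP] at this; simpa using this
    have hq0 : q0 ≠ 0 := fun h => HP ⟨hp0, h⟩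
    have hdegQ : Q.natDegree = 2 := by
      have hle : Q.natDegree ≤ 2 := by rw [hQ]; compute_degree
      have hc : Q.coeff 2 = q0 := by rw [hQ]; simp
      have := le_natDegree_of_ne_zero (n := 2) (by rw [hc]; exact hq0)
      omega
    have hL1z : L1 = 0 := by
      by_contra hL1ne
      have hdvd' : Q ∣ L1 * P := ⟨-L2, by linear_combination key⟩
      have hQL1 : Q ∣ L1 := (hcop.symm).dvd_of_dvd_mul_right hdvd'
      have : Q.natDegree ≤ 1 := le_trans (natDegree_le_of_dvd hQL1 hL1ne)
        (by rw [hL1]; compute_degree)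
      omega
    rw [hL1z, zero_mul, zero_add] at key
    exact hL2ne ((mul_eq_zero.1 key).resolve_right hQne)
  have hL1z : L1 = 0 := by
    rw [hL2z, zero_mul, add_zero] at key
    exact (mul_eq_zero.1 key).resolve_right hPne
  funext i
  fin_cases i
  · have := congrArg (fun r => Polynomial.coeff r 1) hL1z; rw [hL1] at this; simpa using this
  · have := congrArg (fun r => Polynomial.coeff r 0) hL1z; rw [hL1] at this; simpa using this
  · have := congrArg (fun r => Polynomial.coeff r 1) hL2z; rw [hL2] at this; simpa using this
  · have := congrArg (fun r => Polynomial.coeff r 0) hL2z; rw [hL2] at this; simpa using this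

lemma M_surj : ∀ v : Fin 4 → ℂ, ∃ x : Fin 4 → ℂ, (M p0 p1 p2 q0 q1 q2).mulVec x = v := by
  have hinj : Function.Injective (Matrix.mulVecLin (M p0 p1 p2 q0 q1 q2)) := by
    rw [← LinearMap.ker_eq_bot, LinearMap.ker_eq_bot']
    intro x hxz
    exact M_inj HP Hroot x hxz
  have := LinearMap.injective_iff_surjective.1 hinj
  intro v
  obtain ⟨x, hx⟩ := this v
  exact ⟨x, hx⟩

end
end Stmt5LA
end LA

open MvPolynomial


namespace Stmt5
abbrev S := MvPowerSeries (Fin 2) ℂ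
abbrev MP := MvPolynomial (Fin 2) ℂ

def deg (d : Fin 2 →₀ ℕ) : ℕ := d 0 + d 1

lemma deg_add (d e : Fin 2 →₀ ℕ) : deg (d + e) = deg d + deg e := by
  simp [deg]; ring

lemma deg_sum (d : Fin 2 →₀ ℕ) : (∑ i, d i) = deg d := by
  simp [deg, Fin.sum_univ_two]

lemma deg_fsum (d : Fin 2 →₀ ℕ) : (d.sum fun _ k => k) = deg d := by
  rw [Finsupp.sum_fintype]
  · exact deg_sum d
  · intro i; rfl

/-- order at least n -/
def OG (n : ℕ) (h : S) : Prop := ∀ d, deg d < n → MvPowerSeries.coeff d h = 0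

lemma OG.mono {m n : ℕ} (hmn : m ≤ n) {h : S} (h1 : OG n h) : OG m h :=
  fun d hd => h1 d (lt_of_lt_of_le hd hmn)

lemma OG_zero (n : ℕ) : OG n (0 : S) := fun d _ => by simp

lemma OG.add {n : ℕ} {h1 h2 : S} (H1 : OG n h1) (H2 : OG n h2) : OG n (h1 + h2) :=
  fun d hd => by simp [map_add, H1 d hd, H2 d hd]

lemma OG.neg {n : ℕ} {h : S} (H : OG n h) : OG n (-h) := fun d hd => by simp [H d hd]

lemma OG.sub {n : ℕ} {h1 h2 : S} (H1 : OG n h1) (H2 : OG n h2) : OG n (h1 - h2) := by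
  rw [sub_eq_add_neg]; exact H1.add H2.neg

lemma OG.mul {m n : ℕ} {h1 h2 : S} (H1 : OG m h1) (H2 : OG n h2) : OG (m + n) (h1 * h2) := by
  classical
  intro d hd
  rw [MvPowerSeries.coeff_mul]
  refine Finset.sum_eq_zero fun p hp => ?_
  rw [Finset.HasAntidiagonal.mem_antidiagonal] at hp
  have : deg p.1 + deg p.2 < m + n := by rw [← deg_add, hp]; exact hd
  rcases lt_or_ge (deg p.1) m with h | h
  · rw [H1 p.1 h, zero_mul]
  · rw [H2 p.2 (by omega), mul_zero]

lemma OG.pow {m k : ℕ} {h : S} (H : OG m h) : OG (k * m) (h ^ k) := by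
  induction k with
  | zero =>
    intro d hd
    omega
  | succ k ih =>
    rw [pow_succ, Nat.succ_mul]
    exact ih.mul H

/-- the homogeneous component of degree n, as a polynomial -/
def hc (n : ℕ) (h : S) : MP :=
  ∑ d ∈ Finset.finsuppAntidiag (Finset.univ : Finset (Fin 2)) n,
    monomial d (MvPowerSeries.coeff d h)

lemma coeff_hc (n : ℕ) (h : S) (e : Fin 2 →₀ ℕ) :
    MvPolynomial.coeff e (hc n h) = if deg e = n then MvPowerSeries.coeff e h else 0 := by
  classical
  rw [hc, MvPolynomial.coeff_sum]
  simp only [coeff_monomial]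
  by_cases he : deg e = n
  · rw [Finset.sum_eq_single e]
    · simp [he]
    · intro b _ hne; rw [if_neg (by exact fun h => hne h)]
    · intro habs
      exfalso; apply habs
      rw [Finset.mem_finsuppAntidiag]
      constructor
      · rw [← he]; simp [deg, Fin.sum_univ_two]
      · simp
  · rw [if_neg he]
    refine Finset.sum_eq_zero fun b hb => ?_
    rw [Finset.mem_finsuppAntidiag] at hb
    have : deg b = n := by rw [← hb.1]; simp [deg, Fin.sum_univ_two]
    rw [if_neg]; rintro rfl; exact he this

/-- truncation below degree n -/
def truncT (n : ℕ) (h : S) : MP := ∑ m ∈ Finset.range n, hc m h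

lemma coeff_truncT (n : ℕ) (h : S) (e : Fin 2 →₀ ℕ) :
    MvPolynomial.coeff e (truncT n h) = if deg e < n then MvPowerSeries.coeff e h else 0 := by
  rw [truncT, MvPolynomial.coeff_sum]
  simp only [coeff_hc]
  by_cases he : deg e < n
  · rw [if_pos he, Finset.sum_eq_single (deg e)]
    · simp
    · intro b _ hne; rw [if_neg (fun h => hne h.symm)]
    · intro habs; exact absurd (Finset.mem_range.2 he) habs
  · rw [if_neg he]
    refine Finset.sum_eq_zero fun m hm => ?_
    rw [Finset.mem_range] at hm
    rw [if_neg]; omega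

section Subst
variable (σ : Fin 2 → S)

lemma OG_coe {n : ℕ} {p : MP} (hp : ∀ e ∈ p.support, n ≤ deg e) : OG n (p : S) := by
  intro d hd
  rw [MvPolynomial.coeff_coe]
  by_contra h
  exact absurd hd (not_lt.2 (hp d (MvPolynomial.mem_support_iff.2 h)))

lemma OG_zero' (h : S) : OG 0 h := fun d hd => by omega

variable (hσ : ∀ i, OG 1 (σ i))
include hσ

lemma OG_aeval_monomial (e : Fin 2 →₀ ℕ) (c : ℂ) : OG (deg e) (aeval σ (monomial e c)) := by
  rw [MvPolynomial.aeval_monomial]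
  have : (e.prod fun i k => σ i ^ k) = σ 0 ^ e 0 * σ 1 ^ e 1 := by
    rw [Finsupp.prod_fintype _ _ (fun i => pow_zero _), Fin.prod_univ_two]
  rw [this]
  have h0 : OG (e 0) (σ 0 ^ e 0) := by
    have := (hσ 0).pow (k := e 0); rwa [mul_one] at this
  have h1 : OG (e 1) (σ 1 ^ e 1) := by
    have := (hσ 1).pow (k := e 1); rwa [mul_one] at this
  have := (OG_zero' (algebraMap ℂ S c)).mul (h0.mul h1)
  simpa [deg] using this

lemma OG_aeval {n : ℕ} (p : MP) (hp : ∀ e ∈ p.support, n ≤ deg e) : OG n (aeval σ p) := by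
  rw [p.as_sum, map_sum]
  intro d hd
  rw [map_sum]
  refine Finset.sum_eq_zero fun e he => ?_
  exact OG_aeval_monomial σ hσ e _ d (lt_of_lt_of_le hd (hp e he))

lemma aeval_truncT_indep {m n : ℕ} (h : S) (d : Fin 2 →₀ ℕ) (hd : deg d < n) (hnm : n ≤ m) :
    MvPowerSeries.coeff d (aeval σ (truncT m h)) =
      MvPowerSeries.coeff d (aeval σ (truncT n h)) := by
  have key : OG n (aeval σ (truncT m h - truncT n h)) := by
    refine OG_aeval σ hσ _ fun e he => ?_
    rw [MvPolynomial.mem_support_iff] at he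
    by_contra hlt
    rw [not_le] at hlt
    apply he
    rw [MvPolynomial.coeff_sub, coeff_truncT, coeff_truncT, if_pos hlt, if_pos (by omega), sub_self]
  have := key d hd
  rw [map_sub, map_sub] at this
  exact sub_eq_zero.1 this

end Subst

/-- substitution of σ into a power series -/
def subst (σ : Fin 2 → S) (h : S) : S :=
  fun d => MvPowerSeries.coeff d (aeval σ (truncT (deg d + 1) h))

lemma coeff_subst (σ : Fin 2 → S) (h : S) (d : Fin 2 →₀ ℕ) :
    MvPowerSeries.coeff d (subst σ h) =
      MvPowerSeries.coeff d (aeval σ (truncT (deg d + 1) h)) := rfl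

lemma coeff_subst' (σ : Fin 2 → S) (hσ : ∀ i, OG 1 (σ i)) (h : S) (d : Fin 2 →₀ ℕ)
    {n : ℕ} (hd : deg d < n) :
    MvPowerSeries.coeff d (subst σ h) = MvPowerSeries.coeff d (aeval σ (truncT n h)) := by
  rcases le_or_gt n (deg d + 1) with hc | hc
  · rw [coeff_subst, aeval_truncT_indep σ hσ h d hd hc]
  · rw [coeff_subst, aeval_truncT_indep σ hσ h d (by omega) (le_of_lt hc)]


lemma truncT_add (n : ℕ) (h1 h2 : S) : truncT n (h1 + h2) = truncT n h1 + truncT n h2 := by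
  apply MvPolynomial.ext
  intro e
  rw [MvPolynomial.coeff_add, coeff_truncT, coeff_truncT, coeff_truncT, map_add]
  split <;> simp

lemma truncT_coe {n : ℕ} (p : MP) (hn : p.totalDegree < n) : truncT n (p : S) = p := by
  apply MvPolynomial.ext
  intro e
  rw [coeff_truncT, MvPolynomial.coeff_coe]
  split_ifs with h
  · rfl
  · by_contra hne
    have := MvPolynomial.le_totalDegree (MvPolynomial.mem_support_iff.2 fun hh => hne hh.symm)
    rw [deg_fsum] at this
    omega

lemma subst_coe (σ : Fin 2 → S) (hσ : ∀ i, OG 1 (σ i)) (p : MP) :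
    subst σ (p : S) = aeval σ p := by
  apply MvPowerSeries.ext
  intro d
  rw [coeff_subst' σ hσ _ d (n := deg d + 1 + p.totalDegree) (by omega),
    truncT_coe p (by omega)]

lemma OG_subst (σ : Fin 2 → S) (hσ : ∀ i, OG 1 (σ i)) {n : ℕ} {h : S} (hh : OG n h) :
    OG n (subst σ h) := by
  intro d hd
  have ht : truncT n h = 0 := by
    apply MvPolynomial.ext
    intro e
    rw [coeff_truncT]
    split_ifs with he
    · simpa using hh e he
    · simp
  rw [coeff_subst' σ hσ h d hd, ht, map_zero, map_zero]

lemma truncT_mul (n : ℕ) (h1 h2 : S) :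
    ∀ e ∈ (truncT n (h1 * h2) - truncT n h1 * truncT n h2).support, n ≤ deg e := by
  classical
  intro e he
  rw [MvPolynomial.mem_support_iff] at he
  by_contra hlt
  rw [not_le] at hlt
  apply he
  rw [MvPolynomial.coeff_sub, coeff_truncT, if_pos hlt, MvPolynomial.coeff_mul,
    MvPowerSeries.coeff_mul]
  rw [sub_eq_zero]
  refine Finset.sum_congr rfl fun p hp => ?_
  rw [Finset.HasAntidiagonal.mem_antidiagonal] at hp
  have h1' : deg p.1 < n := by have := deg_add p.1 p.2; rw [hp] at this; omega
  have h2' : deg p.2 < n := by have := deg_add p.1 p.2; rw [hp] at this; omega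
  rw [coeff_truncT, coeff_truncT, if_pos h1', if_pos h2']

section SubstA
variable (σ : Fin 2 → S) (hσ : ∀ i, OG 1 (σ i))
include hσ

lemma subst_one : subst σ (1 : S) = 1 := by
  have h := subst_coe σ hσ 1
  rwa [MvPolynomial.coe_one, map_one] at h

omit hσ in
lemma subst_add (x y : S) : subst σ (x + y) = subst σ x + subst σ y := by
  apply MvPowerSeries.ext
  intro d
  rw [map_add, coeff_subst, coeff_subst, coeff_subst, truncT_add, map_add, map_add]

lemma subst_mul (x y : S) : subst σ (x * y) = subst σ x * subst σ y := by
  classical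
  apply MvPowerSeries.ext
  intro d
  have e1 : MvPowerSeries.coeff d (subst σ (x * y)) =
      MvPowerSeries.coeff d (aeval σ (truncT (deg d + 1) x * truncT (deg d + 1) y)) := by
    rw [coeff_subst]
    have key := OG_aeval σ hσ _ (truncT_mul (deg d + 1) x y) d (by omega)
    rw [map_sub, map_sub] at key
    exact sub_eq_zero.1 key
  rw [e1, map_mul, MvPowerSeries.coeff_mul, MvPowerSeries.coeff_mul]
  refine Finset.sum_congr rfl fun p hp => ?_
  rw [Finset.HasAntidiagonal.mem_antidiagonal] at hp
  have hd1 : deg p.1 < deg d + 1 := by have := deg_add p.1 p.2; rw [hp] at this; omega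
  have hd2 : deg p.2 < deg d + 1 := by have := deg_add p.1 p.2; rw [hp] at this; omega
  rw [coeff_subst' σ hσ x p.1 hd1, coeff_subst' σ hσ y p.2 hd2]

/-- substitution as an algebra homomorphism -/
def substA : S →ₐ[ℂ] S where
  toFun := subst σ
  map_one' := subst_one σ hσ
  map_zero' := by
    show subst σ 0 = 0
    have h := subst_coe σ hσ 0
    rwa [MvPolynomial.coe_zero, map_zero] at h
  map_add' := subst_add σ
  map_mul' := subst_mul σ hσ
  commutes' c := by
    show subst σ (algebraMap ℂ S c) = algebraMap ℂ S c
    have h := subst_coe σ hσ (MvPolynomial.C c)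
    rw [aeval_C] at h
    have hC : ((MvPolynomial.C c : MP) : S) = algebraMap ℂ S c := by
      rw [MvPolynomial.coe_C, MvPowerSeries.c_eq_algebraMap]
    rwa [hC] at h

lemma substA_apply (h : S) : substA σ hσ h = subst σ h := rfl

end SubstA

lemma finsupp_eq (e : Fin 2 →₀ ℕ) :
    e = Finsupp.single 0 (e 0) + Finsupp.single 1 (e 1) := by
  ext i
  fin_cases i <;> simp [Finsupp.single_apply]

lemma mono_eq (e : Fin 2 →₀ ℕ) (co : ℂ) :
    (monomial e co : MP) = C co * X 0 ^ e 0 * X 1 ^ e 1 := by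
  rw [X_pow_eq_monomial, X_pow_eq_monomial, mul_assoc, monomial_mul,
    C_mul_monomial, ← finsupp_eq]
  simp

def E3 (k : ℕ) : Fin 2 →₀ ℕ := Finsupp.single 0 k + Finsupp.single 1 (3 - k)

lemma E3_apply0 (k : ℕ) : E3 k 0 = k := by simp [E3, Finsupp.single_apply]
lemma E3_apply1 (k : ℕ) : E3 k 1 = 3 - k := by simp [E3, Finsupp.single_apply]

def fpoly (c : Fin 4 → ℂ) : MP :=
  C (c 0) * X 0 ^ 3 + C (c 1) * X 0 ^ 2 * X 1 + C (c 2) * X 0 * X 1 ^ 2 + C (c 3) * X 1 ^ 3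

lemma degsupp (d : Fin 2 →₀ ℕ) : (∑ i ∈ d.support, d i) = d 0 + d 1 := by
  rw [Finset.sum_subset (Finset.subset_univ d.support)]
  · exact Fin.sum_univ_two d
  · intro x _ hx
    simpa using hx

lemma fpoly_monomials (c : Fin 4 → ℂ) : fpoly c =
    monomial (E3 3) (c 0) + monomial (E3 2) (c 1) + monomial (E3 1) (c 2)
      + monomial (E3 0) (c 3) := by
  rw [fpoly, mono_eq (E3 3), mono_eq (E3 2), mono_eq (E3 1), mono_eq (E3 0)]
  rw [E3_apply0, E3_apply0, E3_apply0, E3_apply0, E3_apply1, E3_apply1, E3_apply1, E3_apply1]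
  norm_num

lemma NF {f : MP} (hf : f.IsHomogeneous 3) : ∃ c : Fin 4 → ℂ, f = fpoly c := by
  refine ⟨fun k => coeff (E3 (3 - (k : ℕ))) f, ?_⟩
  rw [fpoly_monomials]
  simp only [show ((0 : Fin 4) : ℕ) = 0 from rfl, show ((1 : Fin 4) : ℕ) = 1 from rfl,
    show ((2 : Fin 4) : ℕ) = 2 from rfl, show ((3 : Fin 4) : ℕ) = 3 from rfl]
  norm_num
  apply MvPolynomial.ext
  intro e
  simp only [MvPolynomial.coeff_add, coeff_monomial]
  by_cases he : e 0 + e 1 = 3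
  · have heE : e = E3 (e 0) := by
      ext i
      fin_cases i
      · show e 0 = E3 (e 0) 0
        rw [E3_apply0]
      · show e 1 = E3 (e 0) 1
        rw [E3_apply1]; omega
    have hE3inj : ∀ a b : ℕ, E3 a = E3 b → a = b := by
      intro a b hab
      rw [← E3_apply0 a, hab, E3_apply0]
    have h03 : e 0 ≤ 3 := by omega
    rw [heE]
    interval_cases h : e 0 <;>
      · norm_num [fun a b (hab : ¬ a = b) => eq_false (fun hh => hab (hE3inj a b hh))]
  · have hc0 : coeff e f = 0 := by
      refine hf.coeff_eq_zero ?_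
      rw [Finsupp.degree_apply, degsupp]
      exact he
    rw [hc0]
    have hne : ∀ k : ℕ, k ≤ 3 → E3 k ≠ e := by
      intro k hk heq
      apply he
      rw [← heq, E3_apply0, E3_apply1]
      omega
    rw [if_neg (hne 3 (by norm_num)), if_neg (hne 2 (by norm_num)),
      if_neg (hne 1 (by norm_num)), if_neg (hne 0 (by norm_num))]
    norm_num

def f1 (c : Fin 4 → ℂ) : MP :=
  C (3 * c 0) * X 0 ^ 2 + C (2 * c 1) * X 0 * X 1 + C (c 2) * X 1 ^ 2
def f2 (c : Fin 4 → ℂ) : MP :=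
  C (c 1) * X 0 ^ 2 + C (2 * c 2) * X 0 * X 1 + C (3 * c 3) * X 1 ^ 2

lemma pd0 (c : Fin 4 → ℂ) : pderiv 0 (fpoly c) = f1 c := by
  rw [fpoly, f1]
  simp [pderiv_mul, pderiv_pow, pderiv_X, pderiv_C, map_ofNat]
  try ring

lemma pd1 (c : Fin 4 → ℂ) : pderiv 1 (fpoly c) = f2 c := by
  rw [fpoly, f2]
  simp [pderiv_mul, pderiv_pow, pderiv_X, pderiv_C, map_ofNat]
  try ring

lemma eval_f1 (c : Fin 4 → ℂ) (x : Fin 2 → ℂ) :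
    eval x (f1 c) = 3 * c 0 * x 0 ^ 2 + 2 * c 1 * x 0 * x 1 + c 2 * x 1 ^ 2 := by
  simp [f1]
  try ring

lemma eval_f2 (c : Fin 4 → ℂ) (x : Fin 2 → ℂ) :
    eval x (f2 c) = c 1 * x 0 ^ 2 + 2 * c 2 * x 0 * x 1 + 3 * c 3 * x 1 ^ 2 := by
  simp [f2]
  try ring



section Dec
variable (c : Fin 4 → ℂ)

lemma OG_X (i : Fin 2) : OG 1 (((X i : MP) : S)) := by
  intro d hd
  rw [MvPolynomial.coeff_coe, MvPolynomial.coeff_X']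
  split_ifs with h
  · exfalso
    rw [← h] at hd
    have : deg (Finsupp.single i 1) = 1 := by
      fin_cases i <;> simp [deg, Finsupp.single_apply]
    omega
  · rfl

lemma OG_coe_mul {m k : ℕ} {p q : MP} (hp : OG m ((p : MP) : S)) (hq : OG k ((q : MP) : S)) :
    OG (m + k) ((p * q : MP) : S) := by
  rw [MvPolynomial.coe_mul]
  exact hp.mul hq

lemma OG_lin (a b : ℂ) : OG 1 ((C a * X 0 + C b * X 1 : MP) : S) := by
  intro d hd
  have h0 : ¬ (Finsupp.single (0 : Fin 2) 1 = d) := by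
    intro h
    rw [← h] at hd
    simp [deg, Finsupp.single_apply] at hd
  have h1 : ¬ (Finsupp.single (1 : Fin 2) 1 = d) := by
    intro h
    rw [← h] at hd
    simp [deg, Finsupp.single_apply] at hd
  rw [MvPolynomial.coeff_coe]
  simp [MvPolynomial.coeff_X', h0, h1]

lemma OG_sum {n : ℕ} {ι : Type*} (s : Finset ι) (F : ι → S) (h : ∀ i ∈ s, OG n (F i)) :
    OG n (∑ i ∈ s, F i) := by
  classical
  induction s using Finset.induction with
  | empty => simpa using OG_zero n
  | insert _ _ hx ih =>
    rw [Finset.sum_insert hx]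
    exact (h _ (Finset.mem_insert_self _ _)).add
      (ih fun i hi => h i (Finset.mem_insert_of_mem hi))

variable (HP : ¬(3 * c 0 = 0 ∧ c 1 = 0))
  (Hroot : ∀ z : ℂ, 3 * c 0 * z^2 + 2 * c 1 * z + c 2 = 0 →
    c 1 * z^2 + 2 * c 2 * z + 3 * c 3 = 0 → False)
include HP Hroot

lemma cubic_dec (v : Fin 4 → ℂ) : ∃ x : Fin 4 → ℂ,
    (C (x 0) * X 0 + C (x 1) * X 1) * f1 c + (C (x 2) * X 0 + C (x 3) * X 1) * f2 c
      = C (v 0) * X 0 ^ 3 + C (v 1) * X 0 ^ 2 * X 1 + C (v 2) * X 0 * X 1 ^ 2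
        + C (v 3) * X 1 ^ 3 := by
  obtain ⟨x, hx⟩ := Stmt5LA.M_surj HP Hroot v
  refine ⟨x, ?_⟩
  have h0 := congrFun hx 0
  have h1 := congrFun hx 1
  have h2 := congrFun hx 2
  have h3 := congrFun hx 3
  simp [Stmt5LA.M, Matrix.mulVec, dotProduct, Fin.sum_univ_four] at h0 h1 h2 h3
  rw [← h0, ← h1, ← h2, ← h3, f1, f2]
  simp only [map_add, map_mul]
  ring

lemma mono_dec {n : ℕ} (hn : 3 ≤ n) (e : Fin 2 →₀ ℕ) (he : deg e = n) (co : ℂ) :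
    ∃ α β : MP, (monomial e co : MP) = α * f1 c + β * f2 c
      ∧ OG (n - 2) ((α : MP) : S) ∧ OG (n - 2) ((β : MP) : S) := by
  classical
  set k := min (e 0) 3 with hk
  have hk3 : k ≤ 3 := min_le_right _ _
  have hke0 : k ≤ e 0 := min_le_left _ _
  have hk1 : 3 - k ≤ e 1 := by
    rcases le_or_gt 3 (e 0) with h | h
    · have : k = 3 := by omega
      omega
    · have : k = e 0 := by omega
      rw [deg] at he
      omega
  set e' : Fin 2 →₀ ℕ := Finsupp.single 0 (e 0 - k) + Finsupp.single 1 (e 1 - (3 - k)) with he'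
  have he'0 : e' 0 = e 0 - k := by simp [he', Finsupp.single_apply]
  have he'1 : e' 1 = e 1 - (3 - k) := by simp [he', Finsupp.single_apply]
  have hsplit : e' + E3 k = e := by
    ext i
    fin_cases i
    · show e' 0 + E3 k 0 = e 0
      rw [he'0, E3_apply0]; omega
    · show e' 1 + E3 k 1 = e 1
      rw [he'1, E3_apply1]; omega
  -- the cubic monomial as a combination
  set v : Fin 4 → ℂ := fun j => if (j : ℕ) = 3 - k then 1 else 0 with hv
  obtain ⟨x, hx⟩ := cubic_dec c HP Hroot v
  have hcube : (monomial (E3 k) 1 : MP) =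
      (C (x 0) * X 0 + C (x 1) * X 1) * f1 c + (C (x 2) * X 0 + C (x 3) * X 1) * f2 c := by
    rw [hx]
    have hE : (monomial (E3 k) 1 : MP) = X 0 ^ k * X 1 ^ (3 - k) := by
      rw [mono_eq, E3_apply0, E3_apply1, map_one, one_mul]
    rw [hE]
    interval_cases k <;>
      · simp [hv, show ((0 : Fin 4) : ℕ) = 0 from rfl, show ((1 : Fin 4) : ℕ) = 1 from rfl,
          show ((2 : Fin 4) : ℕ) = 2 from rfl, show ((3 : Fin 4) : ℕ) = 3 from rfl]
        try ring
  refine ⟨monomial e' co * (C (x 0) * X 0 + C (x 1) * X 1),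
    monomial e' co * (C (x 2) * X 0 + C (x 3) * X 1), ?_, ?_, ?_⟩
  · have : (monomial e co : MP) = monomial e' co * monomial (E3 k) 1 := by
      rw [MvPolynomial.monomial_mul, mul_one, hsplit]
    rw [this, hcube]
    ring
  · have hOGm : OG (n - 3) ((monomial e' co : MP) : S) := by
      intro d hd
      rw [MvPolynomial.coeff_coe, coeff_monomial]
      split_ifs with hde
      · exfalso
        subst hde
        have : deg e' = n - 3 := by
          rw [deg, he'0, he'1]
          rw [deg] at he
          omega
        omega
      · rfl
    have := OG_coe_mul hOGm (OG_lin (x 0) (x 1))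
    rwa [show (n - 3) + 1 = n - 2 by omega] at this
  · have hOGm : OG (n - 3) ((monomial e' co : MP) : S) := by
      intro d hd
      rw [MvPolynomial.coeff_coe, coeff_monomial]
      split_ifs with hde
      · exfalso
        subst hde
        have : deg e' = n - 3 := by
          rw [deg, he'0, he'1]
          rw [deg] at he
          omega
        omega
      · rfl
    have := OG_coe_mul hOGm (OG_lin (x 2) (x 3))
    rwa [show (n - 3) + 1 = n - 2 by omega] at this

lemma dec_hc {n : ℕ} (hn : 3 ≤ n) (h : S) :
    ∃ α β : MP, (hc n h : MP) = α * f1 c + β * f2 c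
      ∧ OG (n - 2) ((α : MP) : S) ∧ OG (n - 2) ((β : MP) : S) := by
  classical
  -- choose a decomposition for each monomial
  have choice : ∀ d ∈ Finset.finsuppAntidiag (Finset.univ : Finset (Fin 2)) n,
      ∃ ab : MP × MP, (monomial d (MvPowerSeries.coeff d h) : MP) = ab.1 * f1 c + ab.2 * f2 c
        ∧ OG (n - 2) ((ab.1 : MP) : S) ∧ OG (n - 2) ((ab.2 : MP) : S) := by
    intro d hd
    rw [Finset.mem_finsuppAntidiag] at hd
    have hdeg : deg d = n := by
      rw [← hd.1]; simp [deg, Fin.sum_univ_two]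
    obtain ⟨α, β, h1, h2, h3⟩ := mono_dec c HP Hroot hn d hdeg _
    exact ⟨(α, β), h1, h2, h3⟩
  choose F hF1 hF2 hF3 using choice
  refine ⟨∑ d ∈ (Finset.finsuppAntidiag (Finset.univ : Finset (Fin 2)) n).attach,
    (F d.1 d.2).1,
    ∑ d ∈ (Finset.finsuppAntidiag (Finset.univ : Finset (Fin 2)) n).attach,
    (F d.1 d.2).2, ?_, ?_, ?_⟩
  · rw [hc, ← Finset.sum_attach]
    rw [Finset.sum_mul, Finset.sum_mul, ← Finset.sum_add_distrib]
    exact Finset.sum_congr rfl fun d _ => hF1 d.1 d.2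
  · have : ((∑ d ∈ (Finset.finsuppAntidiag (Finset.univ : Finset (Fin 2)) n).attach,
        (F d.1 d.2).1 : MP) : S) =
        ∑ d ∈ (Finset.finsuppAntidiag (Finset.univ : Finset (Fin 2)) n).attach,
        (((F d.1 d.2).1 : MP) : S) := by
      rw [← MvPolynomial.coeToMvPowerSeries.ringHom_apply, map_sum]
      simp only [MvPolynomial.coeToMvPowerSeries.ringHom_apply]
    rw [this]
    exact OG_sum _ _ fun d _ => hF2 d.1 d.2
  · have : ((∑ d ∈ (Finset.finsuppAntidiag (Finset.univ : Finset (Fin 2)) n).attach,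
        (F d.1 d.2).2 : MP) : S) =
        ∑ d ∈ (Finset.finsuppAntidiag (Finset.univ : Finset (Fin 2)) n).attach,
        (((F d.1 d.2).2 : MP) : S) := by
      rw [← MvPolynomial.coeToMvPowerSeries.ringHom_apply, map_sum]
      simp only [MvPolynomial.coeToMvPowerSeries.ringHom_apply]
    rw [this]
    exact OG_sum _ _ fun d _ => hF3 d.1 d.2

end Dec


section Est

/-- constants in the power series ring -/
def C' (a : ℂ) : S := MvPowerSeries.C a

lemma OG_C' (a : ℂ) : OG 0 (C' a) := OG_zero' _

def Xs (i : Fin 2) : S := MvPowerSeries.X i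

lemma OG_Xs (i : Fin 2) : OG 1 (Xs i) := by
  rw [Xs, ← MvPolynomial.coe_X]
  exact OG_X i

variable (c : Fin 4 → ℂ)

def Gexp (s t : S) : S :=
  C' (c 0) * s ^ 3 + C' (c 1) * s ^ 2 * t + C' (c 2) * s * t ^ 2 + C' (c 3) * t ^ 3

def F1e (s t : S) : S := C' (3 * c 0) * s ^ 2 + C' (2 * c 1) * (s * t) + C' (c 2) * t ^ 2
def F2e (s t : S) : S := C' (c 1) * s ^ 2 + C' (2 * c 2) * (s * t) + C' (3 * c 3) * t ^ 2

lemma aeval_fpoly (σ : Fin 2 → S) : aeval σ (fpoly c) = Gexp c (σ 0) (σ 1) := by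
  rw [fpoly, Gexp]
  simp only [map_add, map_mul, map_pow, aeval_X, aeval_C]
  simp only [C', MvPowerSeries.c_eq_algebraMap]

lemma aeval_f1 (σ : Fin 2 → S) : aeval σ (f1 c) = F1e c (σ 0) (σ 1) := by
  rw [f1, F1e]
  simp only [map_add, map_mul, map_pow, aeval_X, aeval_C, C',
    MvPowerSeries.c_eq_algebraMap, map_ofNat]
  ring

lemma aeval_f2 (σ : Fin 2 → S) : aeval σ (f2 c) = F2e c (σ 0) (σ 1) := by
  rw [f2, F2e]
  simp only [map_add, map_mul, map_pow, aeval_X, aeval_C, C',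
    MvPowerSeries.c_eq_algebraMap, map_ofNat]
  ring

lemma coe_fpoly : ((fpoly c : MP) : S) = Gexp c (Xs 0) (Xs 1) := by
  rw [fpoly, Gexp]
  push_cast
  simp only [C', Xs]
  try ring

lemma coe_f1 : ((f1 c : MP) : S) = F1e c (Xs 0) (Xs 1) := by
  rw [f1, F1e]
  push_cast
  simp only [C', Xs]
  try ring

lemma coe_f2 : ((f2 c : MP) : S) = F2e c (Xs 0) (Xs 1) := by
  rw [f2, F2e]
  push_cast
  simp only [C', Xs]
  try ring

lemma OG_G_sub {m : ℕ} (s t s' t' : S) (hs : OG m (s - s')) (ht : OG m (t - t')) :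
    OG m (Gexp c s t - Gexp c s' t') := by
  have hid : Gexp c s t - Gexp c s' t' =
      (s - s') * (C' (c 0) * (s^2 + s*s' + s'^2) + C' (c 1) * (t*(s+s')) + C' (c 2) * t^2)
      + (t - t') * (C' (c 1) * s'^2 + C' (c 2) * (s'*(t+t')) + C' (c 3) * (t^2+t*t'+t'^2)) := by
    rw [Gexp, Gexp]; ring
  rw [hid]
  have h1 := hs.mul (OG_zero' ((C' (c 0) * (s^2 + s*s' + s'^2) + C' (c 1) * (t*(s+s'))
    + C' (c 2) * t^2)))
  have h2 := ht.mul (OG_zero' ((C' (c 1) * s'^2 + C' (c 2) * (s'*(t+t'))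
    + C' (c 3) * (t^2+t*t'+t'^2))))
  rw [add_zero] at h1 h2
  exact h1.add h2

lemma OG_F1_diff (a b : S) (ha : OG 2 a) (hb : OG 2 b) :
    OG 3 (F1e c (Xs 0 + a) (Xs 1 + b) - F1e c (Xs 0) (Xs 1)) := by
  have hid : F1e c (Xs 0 + a) (Xs 1 + b) - F1e c (Xs 0) (Xs 1) =
      C' (3 * c 0) * (a * (a + 2 * Xs 0)) + C' (2 * c 1) * (a * Xs 1 + Xs 0 * b + a * b)
        + C' (c 2) * (b * (b + 2 * Xs 1)) := by
    rw [F1e, F1e]; ring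
  rw [hid]
  have t1 : OG 3 (C' (3 * c 0) * (a * (a + 2 * Xs 0))) := by
    have : OG 1 (a + 2 * Xs 0) := by
      refine (ha.mono (by omega)).add ?_
      have := (OG_zero' (2 : S)).mul (OG_Xs 0)
      simpa using this
    have := (OG_zero' (C' (3 * c 0))).mul (ha.mul this)
    simpa using this
  have t2 : OG 3 (C' (2 * c 1) * (a * Xs 1 + Xs 0 * b + a * b)) := by
    have h1 : OG 3 (a * Xs 1) := ha.mul (OG_Xs 1)
    have h2 : OG 3 (Xs 0 * b) := by
      have := (OG_Xs 0).mul hb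
      simpa [add_comm] using this
    have h3 : OG 3 (a * b) := (ha.mul hb).mono (by omega)
    have := (OG_zero' (C' (2 * c 1))).mul ((h1.add h2).add h3)
    simpa using this
  have t3 : OG 3 (C' (c 2) * (b * (b + 2 * Xs 1))) := by
    have : OG 1 (b + 2 * Xs 1) := by
      refine (hb.mono (by omega)).add ?_
      have := (OG_zero' (2 : S)).mul (OG_Xs 1)
      simpa using this
    have := (OG_zero' (C' (c 2))).mul (hb.mul this)
    simpa using this
  exact (t1.add t2).add t3

lemma OG_F2_diff (a b : S) (ha : OG 2 a) (hb : OG 2 b) :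
    OG 3 (F2e c (Xs 0 + a) (Xs 1 + b) - F2e c (Xs 0) (Xs 1)) := by
  have hid : F2e c (Xs 0 + a) (Xs 1 + b) - F2e c (Xs 0) (Xs 1) =
      C' (c 1) * (a * (a + 2 * Xs 0)) + C' (2 * c 2) * (a * Xs 1 + Xs 0 * b + a * b)
        + C' (3 * c 3) * (b * (b + 2 * Xs 1)) := by
    rw [F2e, F2e]; ring
  rw [hid]
  have t1 : OG 3 (C' (c 1) * (a * (a + 2 * Xs 0))) := by
    have : OG 1 (a + 2 * Xs 0) := by
      refine (ha.mono (by omega)).add ?_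
      have := (OG_zero' (2 : S)).mul (OG_Xs 0)
      simpa using this
    have := (OG_zero' (C' (c 1))).mul (ha.mul this)
    simpa using this
  have t2 : OG 3 (C' (2 * c 2) * (a * Xs 1 + Xs 0 * b + a * b)) := by
    have h1 : OG 3 (a * Xs 1) := ha.mul (OG_Xs 1)
    have h2 : OG 3 (Xs 0 * b) := by
      have := (OG_Xs 0).mul hb
      simpa [add_comm] using this
    have h3 : OG 3 (a * b) := (ha.mul hb).mono (by omega)
    have := (OG_zero' (C' (2 * c 2))).mul ((h1.add h2).add h3)
    simpa using this
  have t3 : OG 3 (C' (3 * c 3) * (b * (b + 2 * Xs 1))) := by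
    have : OG 1 (b + 2 * Xs 1) := by
      refine (hb.mono (by omega)).add ?_
      have := (OG_zero' (2 : S)).mul (OG_Xs 1)
      simpa using this
    have := (OG_zero' (C' (3 * c 3))).mul (hb.mul this)
    simpa using this
  exact (t1.add t2).add t3

lemma key_est {n : ℕ} (hn : 4 ≤ n) (a b al be : S) (ha : OG 2 a) (hb : OG 2 b)
    (hal : OG (n - 2) al) (hbe : OG (n - 2) be) :
    OG (n + 1) (Gexp c (Xs 0 + a + al) (Xs 1 + b + be) - Gexp c (Xs 0 + a) (Xs 1 + b)
      - (al * ((f1 c : MP) : S) + be * ((f2 c : MP) : S))) := by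
  set A := Xs 0 + a with hA
  set B := Xs 1 + b with hB
  have hOA : OG 1 A := (OG_Xs 0).add (ha.mono (by omega))
  have hOB : OG 1 B := (OG_Xs 1).add (hb.mono (by omega))
  have hc0 : C' (3 * c 0) = 3 * C' (c 0) := by simp only [C']; rw [map_mul, map_ofNat]
  have hc1 : C' (2 * c 1) = 2 * C' (c 1) := by simp only [C']; rw [map_mul, map_ofNat]
  have hc2 : C' (2 * c 2) = 2 * C' (c 2) := by simp only [C']; rw [map_mul, map_ofNat]
  have hc3 : C' (3 * c 3) = 3 * C' (c 3) := by simp only [C']; rw [map_mul, map_ofNat]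
  have hid : Gexp c (A + al) (B + be) - Gexp c A B
      - (al * F1e c (Xs 0) (Xs 1) + be * F2e c (Xs 0) (Xs 1)) =
      (C' (c 0) * (3*A*al^2 + al^3) + C' (c 1) * (2*A*al*be + al^2*B + al^2*be)
        + C' (c 2) * (2*B*be*al + be^2*A + be^2*al) + C' (c 3) * (3*B*be^2 + be^3))
      + al * (F1e c A B - F1e c (Xs 0) (Xs 1)) + be * (F2e c A B - F2e c (Xs 0) (Xs 1)) := by
    rw [Gexp, Gexp, F1e, F1e, F2e, F2e]
    rw [hc0, hc1, hc2, hc3]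
    ring
  rw [coe_f1, coe_f2, hid]
  have r1 : OG (n+1) (C' (c 0) * (3*A*al^2 + al^3)) := by
    have h1 : OG (n+1) (3*A*al^2) := by
      have : OG (1 + ((n-2) + (n-2))) (A * (al * al)) := hOA.mul (hal.mul hal)
      have h2 := (OG_zero' (3 : S)).mul this
      rw [zero_add] at h2
      have h3 : OG (n+1) (3 * (A * (al * al))) := h2.mono (by omega)
      have : 3*A*al^2 = 3 * (A * (al * al)) := by ring
      rw [this]
      exact h3
    have h2 : OG (n+1) (al^3) := by
      have : OG ((n-2) + ((n-2) + (n-2))) (al * (al * al)) := hal.mul (hal.mul hal)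
      have h3 : OG (n+1) (al * (al * al)) := this.mono (by omega)
      have : al^3 = al * (al * al) := by ring
      rw [this]
      exact h3
    have := (OG_zero' (C' (c 0))).mul (h1.add h2)
    simpa using this
  have r2 : OG (n+1) (C' (c 1) * (2*A*al*be + al^2*B + al^2*be)) := by
    have h1 : OG (n+1) (2*A*al*be) := by
      have : OG (1 + ((n-2) + (n-2))) (A * (al * be)) := hOA.mul (hal.mul hbe)
      have h2 := (OG_zero' (2 : S)).mul this
      rw [zero_add] at h2
      have h3 : OG (n+1) (2 * (A * (al * be))) := h2.mono (by omega)
      have : 2*A*al*be = 2 * (A * (al * be)) := by ring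
      rw [this]; exact h3
    have h2 : OG (n+1) (al^2*B) := by
      have : OG (((n-2) + (n-2)) + 1) ((al * al) * B) := (hal.mul hal).mul hOB
      have h3 : OG (n+1) ((al*al)*B) := this.mono (by omega)
      have : al^2*B = (al*al)*B := by ring
      rw [this]; exact h3
    have h3 : OG (n+1) (al^2*be) := by
      have : OG (((n-2) + (n-2)) + (n-2)) ((al * al) * be) := (hal.mul hal).mul hbe
      have h4 : OG (n+1) ((al*al)*be) := this.mono (by omega)
      have : al^2*be = (al*al)*be := by ring
      rw [this]; exact h4
    have := (OG_zero' (C' (c 1))).mul ((h1.add h2).add h3)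
    simpa using this
  have r3 : OG (n+1) (C' (c 2) * (2*B*be*al + be^2*A + be^2*al)) := by
    have h1 : OG (n+1) (2*B*be*al) := by
      have : OG (1 + ((n-2) + (n-2))) (B * (be * al)) := hOB.mul (hbe.mul hal)
      have h2 := (OG_zero' (2 : S)).mul this
      rw [zero_add] at h2
      have h3 : OG (n+1) (2 * (B * (be * al))) := h2.mono (by omega)
      have : 2*B*be*al = 2 * (B * (be * al)) := by ring
      rw [this]; exact h3
    have h2 : OG (n+1) (be^2*A) := by
      have : OG (((n-2) + (n-2)) + 1) ((be * be) * A) := (hbe.mul hbe).mul hOA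
      have h3 : OG (n+1) ((be*be)*A) := this.mono (by omega)
      have : be^2*A = (be*be)*A := by ring
      rw [this]; exact h3
    have h3 : OG (n+1) (be^2*al) := by
      have : OG (((n-2) + (n-2)) + (n-2)) ((be * be) * al) := (hbe.mul hbe).mul hal
      have h4 : OG (n+1) ((be*be)*al) := this.mono (by omega)
      have : be^2*al = (be*be)*al := by ring
      rw [this]; exact h4
    have := (OG_zero' (C' (c 2))).mul ((h1.add h2).add h3)
    simpa using this
  have r4 : OG (n+1) (C' (c 3) * (3*B*be^2 + be^3)) := by
    have h1 : OG (n+1) (3*B*be^2) := by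
      have : OG (1 + ((n-2) + (n-2))) (B * (be * be)) := hOB.mul (hbe.mul hbe)
      have h2 := (OG_zero' (3 : S)).mul this
      rw [zero_add] at h2
      have h3 : OG (n+1) (3 * (B * (be * be))) := h2.mono (by omega)
      have : 3*B*be^2 = 3 * (B * (be * be)) := by ring
      rw [this]; exact h3
    have h2 : OG (n+1) (be^3) := by
      have : OG ((n-2) + ((n-2) + (n-2))) (be * (be * be)) := hbe.mul (hbe.mul hbe)
      have h3 : OG (n+1) (be * (be * be)) := this.mono (by omega)
      have : be^3 = be * (be * be) := by ring
      rw [this]; exact h3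
    have := (OG_zero' (C' (c 3))).mul (h1.add h2)
    simpa using this
  have r5 : OG (n+1) (al * (F1e c A B - F1e c (Xs 0) (Xs 1))) := by
    have := hal.mul (OG_F1_diff c a b ha hb)
    exact this.mono (by omega)
  have r6 : OG (n+1) (be * (F2e c A B - F2e c (Xs 0) (Xs 1))) := by
    have := hbe.mul (OG_F2_diff c a b ha hb)
    exact this.mono (by omega)
  exact (((((r1.add r2).add r3).add r4).add r5).add r6)

end Est


section Iter
variable (c : Fin 4 → ℂ) (HP : ¬(3 * c 0 = 0 ∧ c 1 = 0))
  (Hroot : ∀ z : ℂ, 3 * c 0 * z^2 + 2 * c 1 * z + c 2 = 0 →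
    c 1 * z^2 + 2 * c 2 * z + 3 * c 3 = 0 → False)
  (g : S)

def EE (ab : MP × MP) : S := g - Gexp c (Xs 0 + ((ab.1 : MP) : S)) (Xs 1 + ((ab.2 : MP) : S))

variable (HPa : ¬(3 * c 0 = 0 ∧ c 1 = 0))

def pick (k : ℕ) (ab : MP × MP) : MP × MP :=
  ⟨(dec_hc c HP Hroot (n := 4 + k) (by omega) (EE c g ab)).choose,
   (dec_hc c HP Hroot (n := 4 + k) (by omega) (EE c g ab)).choose_spec.choose⟩

lemma pick_spec (k : ℕ) (ab : MP × MP) :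
    (hc (4 + k) (EE c g ab) : MP) = (pick c HP Hroot g k ab).1 * f1 c
        + (pick c HP Hroot g k ab).2 * f2 c
      ∧ OG (4 + k - 2) (((pick c HP Hroot g k ab).1 : MP) : S)
      ∧ OG (4 + k - 2) (((pick c HP Hroot g k ab).2 : MP) : S) :=
  (dec_hc c HP Hroot (n := 4 + k) (by omega) (EE c g ab)).choose_spec.choose_spec

def seq : ℕ → MP × MP
  | 0 => (0, 0)
  | (k+1) => ⟨(seq k).1 + (pick c HP Hroot g k (seq k)).1,
      (seq k).2 + (pick c HP Hroot g k (seq k)).2⟩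

variable (hg4 : OG 4 (g - Gexp c (Xs 0) (Xs 1)))
include hg4

lemma seq_inv : ∀ k, OG 2 (((seq c HP Hroot g k).1 : MP) : S)
    ∧ OG 2 (((seq c HP Hroot g k).2 : MP) : S)
    ∧ OG (4 + k) (EE c g (seq c HP Hroot g k)) := by
  intro k
  induction k with
  | zero =>
    refine ⟨?_, ?_, ?_⟩
    · show OG 2 (((0 : MP) : MP) : S)
      rw [MvPolynomial.coe_zero]
      exact OG_zero 2
    · show OG 2 (((0 : MP) : MP) : S)
      rw [MvPolynomial.coe_zero]
      exact OG_zero 2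
    · show OG (4 + 0) (EE c g (0, 0))
      rw [EE]
      simp only [MvPolynomial.coe_zero, add_zero]
      simpa using hg4
  | succ k ih =>
    obtain ⟨h1, h2, h3⟩ := ih
    obtain ⟨hs1, hs2, hs3⟩ := pick_spec c HP Hroot g k (seq c HP Hroot g k)
    set ab := seq c HP Hroot g k with hab
    set al := (pick c HP Hroot g k ab).1 with hal
    set be := (pick c HP Hroot g k ab).2 with hbe
    have hseq : seq c HP Hroot g (k+1) = ⟨ab.1 + al, ab.2 + be⟩ := rfl
    have key := key_est c (n := 4 + k) (by omega) ((ab.1 : MP) : S) ((ab.2 : MP) : S)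
      ((al : MP) : S) ((be : MP) : S) h1 h2 hs2 hs3
    have hconv : ((hc (4 + k) (EE c g ab) : MP) : S)
        = ((al : MP) : S) * ((f1 c : MP) : S) + ((be : MP) : S) * ((f2 c : MP) : S) := by
      rw [hs1]
      push_cast
      ring
    have hu : OG (5 + k) (EE c g ab - ((hc (4 + k) (EE c g ab) : MP) : S)) := by
      intro d hd
      rw [map_sub, MvPolynomial.coeff_coe, coeff_hc]
      split_ifs with hdeg
      · exact sub_self _
      · have : deg d < 4 + k := by omega
        rw [h3 d this, sub_zero]
    refine ⟨?_, ?_, ?_⟩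
    · rw [hseq]
      show OG 2 ((ab.1 + al : MP) : S)
      rw [MvPolynomial.coe_add]
      exact h1.add (hs2.mono (by omega))
    · rw [hseq]
      show OG 2 ((ab.2 + be : MP) : S)
      rw [MvPolynomial.coe_add]
      exact h2.add (hs3.mono (by omega))
    · have hL : EE c g (seq c HP Hroot g (k+1))
          = g - Gexp c (Xs 0 + ((ab.1 : MP) : S) + ((al : MP) : S))
              (Xs 1 + ((ab.2 : MP) : S) + ((be : MP) : S)) := by
        rw [hseq, EE]
        simp only [MvPolynomial.coe_add]
        rw [show Xs 0 + (((ab.1 : MP) : S) + ((al : MP) : S))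
            = Xs 0 + ((ab.1 : MP) : S) + ((al : MP) : S) by ring,
          show Xs 1 + (((ab.2 : MP) : S) + ((be : MP) : S))
            = Xs 1 + ((ab.2 : MP) : S) + ((be : MP) : S) by ring]
      have hO : EE c g ab = g - Gexp c (Xs 0 + ((ab.1 : MP) : S)) (Xs 1 + ((ab.2 : MP) : S)) := rfl
      have hEE : EE c g (seq c HP Hroot g (k+1)) =
          (EE c g ab - ((hc (4 + k) (EE c g ab) : MP) : S))
          - (Gexp c (Xs 0 + ((ab.1 : MP) : S) + ((al : MP) : S))
                (Xs 1 + ((ab.2 : MP) : S) + ((be : MP) : S))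
              - Gexp c (Xs 0 + ((ab.1 : MP) : S)) (Xs 1 + ((ab.2 : MP) : S))
              - (((al : MP) : S) * ((f1 c : MP) : S) + ((be : MP) : S) * ((f2 c : MP) : S))) := by
        rw [hL, hconv, hO]
        ring
      rw [show 4 + (k + 1) = 5 + k by omega, hEE]
      exact hu.sub (key.mono (by omega))

omit hg4 in
lemma seq_stab1 : ∀ (d : Fin 2 →₀ ℕ) (k l : ℕ), deg d + 1 ≤ k → k ≤ l →
    MvPolynomial.coeff d (seq c HP Hroot g l).1 = MvPolynomial.coeff d (seq c HP Hroot g k).1 := by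
  intro d k l hk hkl
  induction l with
  | zero =>
    have : k = 0 := by omega
    rw [this]
  | succ l ih =>
    rcases Nat.lt_or_ge l k with h | h
    · have : k = l + 1 := by omega
      rw [this]
    · have hstep : MvPolynomial.coeff d (seq c HP Hroot g (l+1)).1
          = MvPolynomial.coeff d (seq c HP Hroot g l).1
            + MvPolynomial.coeff d (pick c HP Hroot g l (seq c HP Hroot g l)).1 := by
        show MvPolynomial.coeff d ((seq c HP Hroot g l).1
          + (pick c HP Hroot g l (seq c HP Hroot g l)).1) = _
        rw [MvPolynomial.coeff_add]
      have hz : MvPolynomial.coeff d (pick c HP Hroot g l (seq c HP Hroot g l)).1 = 0 := by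
        have := (pick_spec c HP Hroot g l (seq c HP Hroot g l)).2.1 d (by omega)
        rwa [MvPolynomial.coeff_coe] at this
      rw [hstep, hz, add_zero]
      exact ih h
  
omit hg4 in
lemma seq_stab2 : ∀ (d : Fin 2 →₀ ℕ) (k l : ℕ), deg d + 1 ≤ k → k ≤ l →
    MvPolynomial.coeff d (seq c HP Hroot g l).2 = MvPolynomial.coeff d (seq c HP Hroot g k).2 := by
  intro d k l hk hkl
  induction l with
  | zero =>
    have : k = 0 := by omega
    rw [this]
  | succ l ih =>
    rcases Nat.lt_or_ge l k with h | h
    · have : k = l + 1 := by omega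
      rw [this]
    · have hstep : MvPolynomial.coeff d (seq c HP Hroot g (l+1)).2
          = MvPolynomial.coeff d (seq c HP Hroot g l).2
            + MvPolynomial.coeff d (pick c HP Hroot g l (seq c HP Hroot g l)).2 := by
        show MvPolynomial.coeff d ((seq c HP Hroot g l).2
          + (pick c HP Hroot g l (seq c HP Hroot g l)).2) = _
        rw [MvPolynomial.coeff_add]
      have hz : MvPolynomial.coeff d (pick c HP Hroot g l (seq c HP Hroot g l)).2 = 0 := by
        have := (pick_spec c HP Hroot g l (seq c HP Hroot g l)).2.2 d (by omega)
        rwa [MvPolynomial.coeff_coe] at this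
      rw [hstep, hz, add_zero]
      exact ih h

def Aa : S := fun d => MvPolynomial.coeff d (seq c HP Hroot g (deg d + 1)).1
def Bb : S := fun d => MvPolynomial.coeff d (seq c HP Hroot g (deg d + 1)).2

omit hg4 in
lemma coeff_Aa (d : Fin 2 →₀ ℕ) : MvPowerSeries.coeff d (Aa c HP Hroot g)
    = MvPolynomial.coeff d (seq c HP Hroot g (deg d + 1)).1 := rfl
omit hg4 in
lemma coeff_Bb (d : Fin 2 →₀ ℕ) : MvPowerSeries.coeff d (Bb c HP Hroot g)
    = MvPolynomial.coeff d (seq c HP Hroot g (deg d + 1)).2 := rfl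

omit hg4 in
lemma Aa_sub (k : ℕ) : OG k (Aa c HP Hroot g - (((seq c HP Hroot g k).1 : MP) : S)) := by
  intro d hd
  rw [map_sub, coeff_Aa, MvPolynomial.coeff_coe,
    seq_stab1 c HP Hroot g d (deg d + 1) k le_rfl (by omega), sub_self]

omit hg4 in
lemma Bb_sub (k : ℕ) : OG k (Bb c HP Hroot g - (((seq c HP Hroot g k).2 : MP) : S)) := by
  intro d hd
  rw [map_sub, coeff_Bb, MvPolynomial.coeff_coe,
    seq_stab2 c HP Hroot g d (deg d + 1) k le_rfl (by omega), sub_self]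

lemma OG_Aa : OG 2 (Aa c HP Hroot g) := by
  intro d hd
  rw [coeff_Aa, ← MvPolynomial.coeff_coe]
  exact (seq_inv c HP Hroot g hg4 (deg d + 1)).1 d hd

lemma OG_Bb : OG 2 (Bb c HP Hroot g) := by
  intro d hd
  rw [coeff_Bb, ← MvPolynomial.coeff_coe]
  exact (seq_inv c HP Hroot g hg4 (deg d + 1)).2.1 d hd

def sigma' : Fin 2 → S := ![Xs 0 + Aa c HP Hroot g, Xs 1 + Bb c HP Hroot g]

omit hg4 in
lemma sigma'_0 : sigma' c HP Hroot g 0 = Xs 0 + Aa c HP Hroot g := rfl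
omit hg4 in
lemma sigma'_1 : sigma' c HP Hroot g 1 = Xs 1 + Bb c HP Hroot g := rfl

lemma sigma'_OG1 : ∀ i, OG 1 (sigma' c HP Hroot g i) := by
  intro i
  fin_cases i
  · rw [show ((⟨0, by omega⟩ : Fin 2) : Fin 2) = 0 from rfl, sigma'_0]
    exact (OG_Xs 0).add ((OG_Aa c HP Hroot g hg4).mono (by omega))
  · rw [show ((⟨1, by omega⟩ : Fin 2) : Fin 2) = 1 from rfl, sigma'_1]
    exact (OG_Xs 1).add ((OG_Bb c HP Hroot g hg4).mono (by omega))

lemma sigma'_OG2 : ∀ i, OG 2 (sigma' c HP Hroot g i - Xs i) := by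
  intro i
  fin_cases i
  · rw [show ((⟨0, by omega⟩ : Fin 2) : Fin 2) = 0 from rfl, sigma'_0]
    have : Xs 0 + Aa c HP Hroot g - Xs 0 = Aa c HP Hroot g := by ring
    rw [this]
    exact OG_Aa c HP Hroot g hg4
  · rw [show ((⟨1, by omega⟩ : Fin 2) : Fin 2) = 1 from rfl, sigma'_1]
    have : Xs 1 + Bb c HP Hroot g - Xs 1 = Bb c HP Hroot g := by ring
    rw [this]
    exact OG_Bb c HP Hroot g hg4

lemma subst_sigma'_f : subst (sigma' c HP Hroot g) ((fpoly c : MP) : S) = g := by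
  rw [subst_coe _ (sigma'_OG1 c HP Hroot g hg4), aeval_fpoly, sigma'_0, sigma'_1]
  apply MvPowerSeries.ext
  intro d
  set k := deg d + 1 with hk
  have hdiff : OG k (Gexp c (Xs 0 + Aa c HP Hroot g) (Xs 1 + Bb c HP Hroot g)
      - Gexp c (Xs 0 + (((seq c HP Hroot g k).1 : MP) : S))
          (Xs 1 + (((seq c HP Hroot g k).2 : MP) : S))) := by
    apply OG_G_sub
    · have : (Xs 0 + Aa c HP Hroot g) - (Xs 0 + (((seq c HP Hroot g k).1 : MP) : S))
        = Aa c HP Hroot g - (((seq c HP Hroot g k).1 : MP) : S) := by ring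
      rw [this]
      exact Aa_sub c HP Hroot g k
    · have : (Xs 1 + Bb c HP Hroot g) - (Xs 1 + (((seq c HP Hroot g k).2 : MP) : S))
        = Bb c HP Hroot g - (((seq c HP Hroot g k).2 : MP) : S) := by ring
      rw [this]
      exact Bb_sub c HP Hroot g k
  have h1 : MvPowerSeries.coeff d (Gexp c (Xs 0 + Aa c HP Hroot g) (Xs 1 + Bb c HP Hroot g))
      = MvPowerSeries.coeff d (Gexp c (Xs 0 + (((seq c HP Hroot g k).1 : MP) : S))
          (Xs 1 + (((seq c HP Hroot g k).2 : MP) : S))) := by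
    have := hdiff d (by omega)
    rw [map_sub] at this
    exact sub_eq_zero.1 this
  have h2 := (seq_inv c HP Hroot g hg4 k).2.2 d (by omega)
  rw [EE, map_sub] at h2
  have := sub_eq_zero.1 h2
  rw [h1, ← this]

end Iter

section Bij
variable (σ : Fin 2 → S) (hσ1 : ∀ i, OG 1 (σ i)) (hσ2 : ∀ i, OG 2 (σ i - Xs i))

lemma OG_pow_sub {u v : S} (hu : OG 1 u) (huv : OG 2 (u - v)) :
    ∀ k : ℕ, OG (k + 1) (u ^ k - v ^ k) := by
  have hv : OG 1 v := by
    have : v = u - (u - v) := by ring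
    rw [this]
    exact hu.sub (huv.mono (by omega))
  intro k
  induction k with
  | zero => simpa using OG_zero 1
  | succ k ih =>
    have hid : u ^ (k+1) - v ^ (k+1) = (u ^ k - v ^ k) * u + v ^ k * (u - v) := by ring
    rw [hid]
    have h1 : OG (k + 2) ((u ^ k - v ^ k) * u) := ih.mul hu
    have h2 : OG (k + 2) (v ^ k * (u - v)) := by
      have hp : OG k (v ^ k) := by
        have := hv.pow (k := k)
        rwa [mul_one] at this
      exact hp.mul huv
    exact (h1.add h2).mono (by omega)

lemma aeval_monomial2 (e : Fin 2 →₀ ℕ) (co : ℂ) :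
    aeval σ (monomial e co) = C' co * σ 0 ^ e 0 * σ 1 ^ e 1 := by
  rw [MvPolynomial.aeval_monomial]
  have : (e.prod fun i k => σ i ^ k) = σ 0 ^ e 0 * σ 1 ^ e 1 := by
    rw [Finsupp.prod_fintype _ _ (fun i => pow_zero _), Fin.prod_univ_two]
  rw [this, C', MvPowerSeries.c_eq_algebraMap, mul_assoc]

lemma coe_monomial2 (e : Fin 2 →₀ ℕ) (co : ℂ) :
    ((monomial e co : MP) : S) = C' co * Xs 0 ^ e 0 * Xs 1 ^ e 1 := by
  rw [mono_eq]
  push_cast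
  simp only [C', Xs]

include hσ1 hσ2 in
lemma OG_aeval_sub_mono (e : Fin 2 →₀ ℕ) (co : ℂ) :
    OG (deg e + 1) (aeval σ (monomial e co) - ((monomial e co : MP) : S)) := by
  rw [aeval_monomial2, coe_monomial2]
  have hid : C' co * σ 0 ^ e 0 * σ 1 ^ e 1 - C' co * Xs 0 ^ e 0 * Xs 1 ^ e 1
      = C' co * ((σ 0 ^ e 0 - Xs 0 ^ e 0) * σ 1 ^ e 1 + Xs 0 ^ e 0 * (σ 1 ^ e 1 - Xs 1 ^ e 1)) := by
    ring
  rw [hid]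
  have hpow0 : OG (e 0 + 1) (σ 0 ^ e 0 - Xs 0 ^ e 0) := OG_pow_sub (hσ1 0) (hσ2 0) (e 0)
  have hpow1 : OG (e 1 + 1) (σ 1 ^ e 1 - Xs 1 ^ e 1) := OG_pow_sub (hσ1 1) (hσ2 1) (e 1)
  have hs1 : OG (e 1) (σ 1 ^ e 1) := by
    have := (hσ1 1).pow (k := e 1)
    rwa [mul_one] at this
  have hX0 : OG (e 0) (Xs 0 ^ e 0) := by
    have := (OG_Xs 0).pow (k := e 0)
    rwa [mul_one] at this
  have t1 : OG (deg e + 1) ((σ 0 ^ e 0 - Xs 0 ^ e 0) * σ 1 ^ e 1) := by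
    have := hpow0.mul hs1
    exact this.mono (by rw [deg]; omega)
  have t2 : OG (deg e + 1) (Xs 0 ^ e 0 * (σ 1 ^ e 1 - Xs 1 ^ e 1)) := by
    have := hX0.mul hpow1
    exact this.mono (by rw [deg]; omega)
  have := (OG_zero' (C' co)).mul (t1.add t2)
  simpa using this

include hσ1 hσ2 in
lemma OG_aeval_sub_sum {m : ℕ} (s : Finset (Fin 2 →₀ ℕ)) (w : (Fin 2 →₀ ℕ) → ℂ)
    (hs : ∀ e ∈ s, m ≤ deg e) :
    OG (m + 1) (aeval σ (∑ e ∈ s, monomial e (w e)) - ((∑ e ∈ s, monomial e (w e) : MP) : S)) := by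
  rw [map_sum, ← MvPolynomial.coeToMvPowerSeries.ringHom_apply, map_sum]
  simp only [MvPolynomial.coeToMvPowerSeries.ringHom_apply]
  rw [← Finset.sum_sub_distrib]
  apply OG_sum
  intro e he
  exact (OG_aeval_sub_mono σ hσ1 hσ2 e _).mono (by have := hs e he; omega)

include hσ1 hσ2 in
lemma OG_aeval_sub_poly {m : ℕ} (p : MP) (hp : ∀ e ∈ p.support, m ≤ deg e) :
    OG (m + 1) (aeval σ p - (p : S)) := by
  have h := OG_aeval_sub_sum σ hσ1 hσ2 p.support (fun e => MvPolynomial.coeff e p) hp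
  rwa [← p.as_sum] at h

include hσ1 hσ2 in
lemma subst_injective : Function.Injective (subst σ) := by
  intro x y hxy
  by_contra hne
  have hsub : x - y ≠ 0 := sub_ne_zero.2 hne
  set h := x - y with hh
  have hphiz : subst σ h = 0 := by
    rw [hh]
    have := map_sub (substA σ hσ1) x y
    rw [substA_apply, substA_apply, substA_apply] at this
    rw [this, hxy, sub_self]
  have hex : ∃ n : ℕ, ∃ d, deg d = n ∧ MvPowerSeries.coeff d h ≠ 0 := by
    by_contra hcon
    push_neg at hcon
    apply hsub
    apply MvPowerSeries.ext
    intro d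
    rw [map_zero]
    exact hcon (deg d) d rfl
  classical
  set n := Nat.find hex with hn
  obtain ⟨d0, hd0, hd0ne⟩ := Nat.find_spec hex
  have hOG : OG n h := by
    intro e he
    by_contra hce
    have hfind : Nat.find hex ≤ deg e := Nat.find_le ⟨e, rfl, hce⟩
    omega
  have hsupp : ∀ e ∈ (truncT (n+1) h).support, n ≤ deg e := by
    intro e he
    rw [MvPolynomial.mem_support_iff, coeff_truncT] at he
    by_contra hlt
    rw [not_le] at hlt
    apply he
    rw [if_pos (by omega)]
    exact hOG e hlt
  have hkey := OG_aeval_sub_poly σ hσ1 hσ2 (truncT (n+1) h) hsupp d0 (by omega)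
  rw [map_sub] at hkey
  have h1 : MvPowerSeries.coeff d0 (aeval σ (truncT (n+1) h))
      = MvPowerSeries.coeff d0 ((truncT (n+1) h : MP) : S) := sub_eq_zero.1 hkey
  have h2 : MvPowerSeries.coeff d0 (subst σ h) = MvPowerSeries.coeff d0
      (aeval σ (truncT (n+1) h)) := coeff_subst' σ hσ1 h d0 (by omega)
  rw [hphiz, map_zero] at h2
  rw [← h2, MvPolynomial.coeff_coe, coeff_truncT, if_pos (by omega)] at h1
  exact hd0ne h1.symm

def tseq (h : S) : ℕ → MP
  | 0 => 0
  | m+1 => tseq h m + hc m (h - subst σ ((tseq h m : MP) : S))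

include hσ1 hσ2 in
lemma tseq_inv (h : S) : ∀ m, OG m (h - subst σ ((tseq σ h m : MP) : S)) := by
  intro m
  induction m with
  | zero => exact OG_zero' _
  | succ m ih =>
    set E := h - subst σ ((tseq σ h m : MP) : S) with hE
    set u := hc m E with hu
    have hstep : (tseq σ h (m+1) : MP) = tseq σ h m + u := rfl
    have hsubst : subst σ ((tseq σ h (m+1) : MP) : S)
        = subst σ ((tseq σ h m : MP) : S) + aeval σ u := by
      rw [hstep, MvPolynomial.coe_add, subst_add σ, subst_coe σ hσ1 u]
    have hsupp : ∀ e ∈ u.support, m ≤ deg e := by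
      intro e he
      rw [MvPolynomial.mem_support_iff, coeff_hc] at he
      split_ifs at he with hd
      · omega
      · exact absurd rfl he
    have herr := OG_aeval_sub_poly σ hσ1 hσ2 u hsupp
    have hid : h - subst σ ((tseq σ h (m+1) : MP) : S)
        = (E - ((u : MP) : S)) - (aeval σ u - ((u : MP) : S)) := by
      rw [hsubst, hE]
      ring
    rw [hid]
    refine OG.sub ?_ herr
    intro d hd
    rw [map_sub, MvPolynomial.coeff_coe, hu, coeff_hc]
    split_ifs with hdd
    · exact sub_self _
    · rw [ih d (by omega), sub_zero]

lemma tseq_stab (h : S) : ∀ (d : Fin 2 →₀ ℕ) (k l : ℕ), deg d + 1 ≤ k → k ≤ l →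
    MvPolynomial.coeff d (tseq σ h l) = MvPolynomial.coeff d (tseq σ h k) := by
  intro d k l hk hkl
  induction l with
  | zero =>
    have : k = 0 := by omega
    rw [this]
  | succ l ih =>
    rcases Nat.lt_or_ge l k with hlt | hge
    · have : k = l + 1 := by omega
      rw [this]
    · have hstep : (tseq σ h (l+1) : MP) = tseq σ h l + hc l (h - subst σ ((tseq σ h l : MP) : S)) := rfl
      rw [hstep, MvPolynomial.coeff_add, coeff_hc, if_neg (by omega), add_zero]
      exact ih hge

include hσ1 hσ2 in
lemma subst_surjective : Function.Surjective (subst σ) := by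
  intro h
  set tlim : S := fun d => MvPolynomial.coeff d (tseq σ h (deg d + 1)) with htlim
  have coeff_tlim : ∀ d, MvPowerSeries.coeff d tlim
      = MvPolynomial.coeff d (tseq σ h (deg d + 1)) := fun d => rfl
  refine ⟨tlim, ?_⟩
  apply MvPowerSeries.ext
  intro d
  set k := deg d + 1 with hk
  have hdiff : OG k (tlim - ((tseq σ h k : MP) : S)) := by
    intro e he
    rw [map_sub, coeff_tlim, MvPolynomial.coeff_coe,
      tseq_stab σ h e (deg e + 1) k le_rfl (by omega), sub_self]
  have h1 : MvPowerSeries.coeff d (subst σ tlim)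
      = MvPowerSeries.coeff d (subst σ ((tseq σ h k : MP) : S)) := by
    have hmap : subst σ tlim - subst σ ((tseq σ h k : MP) : S)
        = subst σ (tlim - ((tseq σ h k : MP) : S)) := by
      have := map_sub (substA σ hσ1) tlim ((tseq σ h k : MP) : S)
      rw [substA_apply, substA_apply, substA_apply] at this
      exact this.symm
    have := OG_subst σ hσ1 hdiff d (by omega)
    rw [← hmap, map_sub] at this
    exact sub_eq_zero.1 this
  have h2 := tseq_inv σ hσ1 hσ2 h k d (by omega)
  rw [map_sub] at h2
  rw [h1, ← sub_eq_zero]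
  rw [sub_eq_zero] at h2
  rw [h2]
  exact sub_self _

end Bij

lemma exists_algEquiv (σ : Fin 2 → S) (hσ1 : ∀ i, OG 1 (σ i)) (hσ2 : ∀ i, OG 2 (σ i - Xs i)) :
    ∃ φ : S ≃ₐ[ℂ] S, ∀ x, φ x = subst σ x :=
  ⟨AlgEquiv.ofBijective (substA σ hσ1)
    ⟨subst_injective σ hσ1 hσ2, subst_surjective σ hσ1 hσ2⟩, fun _ => rfl⟩


end Stmt5

/-- If `f ∈ ℂ[x₁,x₂]` is a regular homogeneous polynomial of degree `3`,
viewed in `ℂ⟦x₁,x₂⟧`, then `f` is formally `3`-determined: for every formal power series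
`g` with `g − f` of order at least `4` there is a `ℂ`-algebra automorphism `φ` of
`ℂ⟦x₁,x₂⟧` with `φ(f) = g`. -/
theorem stmt_5 (f : MvPolynomial (Fin 2) ℂ)
    (hf : MvPolynomial.IsHomogeneous f 3)
    (hreg : ∀ x : Fin 2 → ℂ, (∀ i, eval x (pderiv i f) = 0) → x = 0)
    (g : MvPowerSeries (Fin 2) ℂ)
    (hg : ∀ d : Fin 2 →₀ ℕ, (∑ i, d i) < 4 →
      MvPowerSeries.coeff d (g - (f : MvPowerSeries (Fin 2) ℂ)) = 0) :
    ∃ φ : MvPowerSeries (Fin 2) ℂ ≃ₐ[ℂ] MvPowerSeries (Fin 2) ℂ,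
      φ (f : MvPowerSeries (Fin 2) ℂ) = g := by
  obtain ⟨c, hcf⟩ := Stmt5.NF hf
  have hHP : ¬(3 * c 0 = 0 ∧ c 1 = 0) := by
    rintro ⟨h1, h2⟩
    have hx : (![1, 0] : Fin 2 → ℂ) = 0 := by
      apply hreg
      intro i
      fin_cases i
      · show eval ![1, 0] (pderiv 0 f) = 0
        rw [hcf, Stmt5.pd0, Stmt5.eval_f1]
        simp only [Matrix.cons_val_zero, Matrix.cons_val_one, Matrix.head_cons]
        linear_combination h1
      · show eval ![1, 0] (pderiv 1 f) = 0
        rw [hcf, Stmt5.pd1, Stmt5.eval_f2]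
        simp only [Matrix.cons_val_zero, Matrix.cons_val_one, Matrix.head_cons]
        linear_combination h2
    have := congrFun hx 0
    simp at this
  have hroot : ∀ z : ℂ, 3 * c 0 * z^2 + 2 * c 1 * z + c 2 = 0 →
      c 1 * z^2 + 2 * c 2 * z + 3 * c 3 = 0 → False := by
    intro z hz1 hz2
    have hx : (![z, 1] : Fin 2 → ℂ) = 0 := by
      apply hreg
      intro i
      fin_cases i
      · show eval ![z, 1] (pderiv 0 f) = 0
        rw [hcf, Stmt5.pd0, Stmt5.eval_f1]
        simp only [Matrix.cons_val_zero, Matrix.cons_val_one, Matrix.head_cons]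
        linear_combination hz1
      · show eval ![z, 1] (pderiv 1 f) = 0
        rw [hcf, Stmt5.pd1, Stmt5.eval_f2]
        simp only [Matrix.cons_val_zero, Matrix.cons_val_one, Matrix.head_cons]
        linear_combination hz2
    have := congrFun hx 1
    simp at this
  have hg4 : Stmt5.OG 4 (g - Stmt5.Gexp c (Stmt5.Xs 0) (Stmt5.Xs 1)) := by
    intro d hd
    have hco := hg d (by rw [Stmt5.deg_sum]; omega)
    rw [hcf] at hco
    rw [← Stmt5.coe_fpoly]
    exact hco
  obtain ⟨φ, hφ⟩ := Stmt5.exists_algEquiv (Stmt5.sigma' c hHP hroot g)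
    (Stmt5.sigma'_OG1 c hHP hroot g hg4) (Stmt5.sigma'_OG2 c hHP hroot g hg4)
  refine ⟨φ, ?_⟩
  rw [hφ, hcf]
  exact Stmt5.subst_sigma'_f c hHP hroot g hg4
end
end

section
/- Let n ≥ 2 and m ≥ 3 be integers with nm > 2n + m. Then there exists t ∈ ℂ with t ≠ 0 such that the polynomial g = x₁^m + ⋯ + xₙ^m + t·x₁^{m−2}x₂^{m−2}⋯xₙ^{m−2} does not belong to the ideal of the formal power series ring ℂ⟦x₁,…,xₙ⟧ generated by its partial derivatives ∂g/∂x₁,…,∂g/∂xₙ. -/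
open MvPolynomial

/-- The polynomial `x₁^m + ⋯ + xₙ^m + t·x₁^{m−2}⋯xₙ^{m−2}`. -/
noncomputable def fermatPerturbed (n m : ℕ) (t : ℂ) : MvPolynomial (Fin n) ℂ :=
  (∑ i, X i ^ m) + C t * ∏ i, X i ^ (m - 2)

/-- For integers `n ≥ 2`, `m ≥ 3` with `nm > 2n + m`, there is `t ≠ 0` such
that `g = x₁^m + ⋯ + xₙ^m + t·x₁^{m−2}⋯xₙ^{m−2}` does not belong to the ideal of
`ℂ⟦x₁,…,xₙ⟧` generated by its partial derivatives. -/
theorem stmt_6 (n m : ℕ) (hn : 2 ≤ n) (hm : 3 ≤ m) (h : 2 * n + m < n * m) :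
    ∃ t : ℂ, t ≠ 0 ∧
      ((fermatPerturbed n m t : MvPolynomial (Fin n) ℂ) : MvPowerSeries (Fin n) ℂ) ∉
        Ideal.span (Set.range fun i =>
          ((pderiv i (fermatPerturbed n m t) : MvPolynomial (Fin n) ℂ) :
            MvPowerSeries (Fin n) ℂ)) := by
  classical
  obtain ⟨k, rfl⟩ : ∃ k, m = k + 3 := ⟨m - 3, by omega⟩
  haveI : Nontrivial (Fin n) := ⟨⟨0, by omega⟩, ⟨1, by omega⟩, by simp [Fin.ext_iff]⟩
  refine ⟨1, one_ne_zero, fun hmem => ?_⟩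
  set D : Fin n →₀ ℕ := ∑ j : Fin n, Finsupp.single j (k + 1) with hDdef
  have hD : ∀ l, D l = k + 1 := by
    intro l
    rw [hDdef, Finsupp.finset_sum_apply,
      Finset.sum_eq_single l (fun j _ hj => Finsupp.single_eq_of_ne' hj)
        (fun habs => absurd (Finset.mem_univ l) habs)]
    exact Finsupp.single_eq_same
  -- the polynomial in monomial form
  have hgpoly : fermatPerturbed n (k + 3) (1 : ℂ)
      = (∑ j : Fin n, monomial (Finsupp.single j (k + 3)) (1 : ℂ)) + monomial D 1 := by
    rw [fermatPerturbed, map_one, one_mul]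
    congr 1
    · exact Finset.sum_congr rfl fun j _ => X_pow_eq_monomial
    · have hsupp : D.support = Finset.univ := by
        ext l; simp [Finsupp.mem_support_iff, hD]
      have h32 : k + 3 - 2 = k + 1 := by omega
      calc (∏ j : Fin n, (X j : MvPolynomial (Fin n) ℂ) ^ (k + 3 - 2))
          = ∏ j ∈ D.support, (X j : MvPolynomial (Fin n) ℂ) ^ D j := by
            rw [hsupp]
            exact Finset.prod_congr rfl fun j _ => by rw [hD, h32]
        _ = monomial D (1 : ℂ) := prod_X_pow_eq_monomial
  -- the partial derivatives in monomial form
  have hpd : ∀ i : Fin n, pderiv i (fermatPerturbed n (k + 3) (1 : ℂ))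
      = monomial (Finsupp.single i (k + 2)) (((k : ℂ) + 3))
        + monomial (D - Finsupp.single i 1) (((k : ℂ) + 1)) := by
    intro i
    rw [hgpoly, map_add, map_sum]
    congr 1
    · rw [Finset.sum_eq_single i]
      · rw [pderiv_monomial]
        have h1 : Finsupp.single i (k + 3) - Finsupp.single i 1 = Finsupp.single i (k + 2) := by
          rw [← Finsupp.single_tsub]; congr 1
        have h2 : (Finsupp.single i (k + 3)) i = k + 3 := Finsupp.single_eq_same
        rw [h1, h2]
        congr 1
        push_cast
        ring
      · intro j _ hji
        rw [pderiv_monomial, Finsupp.single_eq_of_ne' hji]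
        simp
      · intro habs; exact absurd (Finset.mem_univ i) habs
    · rw [pderiv_monomial, hD i]
      congr 1
      push_cast
      ring
  -- the linear functional certificate
  set L : MvPowerSeries (Fin n) ℂ → ℂ := fun f =>
    ((k : ℂ) + 3) * MvPowerSeries.coeff D f
      - ((k : ℂ) + 1) * ∑ j : Fin n, MvPowerSeries.coeff (Finsupp.single j (k + 3)) f
    with hLdef
  have hLadd : ∀ a b, L (a + b) = L a + L b := by
    intro a b
    simp only [hLdef, map_add, Finset.sum_add_distrib]
    ring
  -- L kills every multiple of every partial derivative
  have hgen : ∀ (i : Fin n) (hs : MvPowerSeries (Fin n) ℂ),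
      L (hs * ((pderiv i (fermatPerturbed n (k + 3) (1 : ℂ)) : MvPolynomial (Fin n) ℂ) :
        MvPowerSeries (Fin n) ℂ)) = 0 := by
    intro i hs
    rw [hpd i, coe_add, coe_monomial, coe_monomial, mul_add]
    have h1 : MvPowerSeries.coeff D
        (hs * MvPowerSeries.monomial (Finsupp.single i (k + 2)) ((k : ℂ) + 3)) = 0 := by
      rw [MvPowerSeries.coeff_mul_monomial, if_neg]
      intro hle
      have := hle i
      rw [Finsupp.single_eq_same, hD] at this
      omega
    have hsub_le : D - Finsupp.single i 1 ≤ D := tsub_le_self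
    have hDD : D - (D - Finsupp.single i 1) = Finsupp.single i 1 := by
      ext l
      rw [Finsupp.tsub_apply, Finsupp.tsub_apply, hD]
      have : Finsupp.single i 1 l ≤ 1 := by
        rw [Finsupp.single_apply]; split <;> omega
      omega
    have h2 : MvPowerSeries.coeff D
        (hs * MvPowerSeries.monomial (D - Finsupp.single i 1) ((k : ℂ) + 1))
        = MvPowerSeries.coeff (Finsupp.single i 1) hs * ((k : ℂ) + 1) := by
      rw [MvPowerSeries.coeff_mul_monomial, if_pos hsub_le, hDD]
    have h3 : ∑ j : Fin n, MvPowerSeries.coeff (Finsupp.single j (k + 3))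
        (hs * MvPowerSeries.monomial (Finsupp.single i (k + 2)) ((k : ℂ) + 3))
        = MvPowerSeries.coeff (Finsupp.single i 1) hs * ((k : ℂ) + 3) := by
      rw [Finset.sum_eq_single i]
      · have hss : Finsupp.single i (k + 3) - Finsupp.single i (k + 2)
            = Finsupp.single i 1 := by
          rw [← Finsupp.single_tsub]; congr 1; omega
        have hle' : Finsupp.single i (k + 2) ≤ Finsupp.single i (k + 3) := by
          intro l
          rw [Finsupp.single_apply, Finsupp.single_apply]
          split <;> omega
        rw [MvPowerSeries.coeff_mul_monomial, if_pos hle', hss]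
      · intro j _ hji
        rw [MvPowerSeries.coeff_mul_monomial, if_neg]
        intro hle
        have := hle i
        rw [Finsupp.single_eq_same, Finsupp.single_apply, if_neg hji] at this
        omega
      · intro habs; exact absurd (Finset.mem_univ i) habs
    have h4 : ∀ j : Fin n, MvPowerSeries.coeff (Finsupp.single j (k + 3))
        (hs * MvPowerSeries.monomial (D - Finsupp.single i 1) ((k : ℂ) + 1)) = 0 := by
      intro j
      rw [MvPowerSeries.coeff_mul_monomial, if_neg]
      intro hle
      by_cases hex : ∃ l, l ≠ i ∧ l ≠ j
      · obtain ⟨l, hli, hlj⟩ := hex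
        have := hle l
        have hiv : (Finsupp.single i 1) l = 0 :=
          Finsupp.single_eq_of_ne' (fun hh => hli hh.symm)
        have hjv : (Finsupp.single j (k + 3)) l = 0 :=
          Finsupp.single_eq_of_ne' (fun hh => hlj hh.symm)
        rw [Finsupp.tsub_apply, hD, hiv, hjv] at this
        omega
      · push_neg at hex
        have hsub : (Finset.univ : Finset (Fin n)) ⊆ {i, j} := by
          intro l _
          by_cases hl : l = i
          · simp [hl]
          · simp [hex l hl]
        have hcard : n ≤ 2 := by
          have := Finset.card_le_card hsub
          have h2' : ({i, j} : Finset (Fin n)).card ≤ 2 :=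
            (Finset.card_insert_le _ _).trans (by simp)
          simpa using this.trans h2'
        have hn2 : n = 2 := le_antisymm hcard hn
        have hk2 : 2 ≤ k := by rw [hn2] at h; omega
        obtain ⟨l, hlj⟩ := exists_ne j
        have := hle l
        have hsl : Finsupp.single i 1 l ≤ 1 := by
          rw [Finsupp.single_apply]; split <;> omega
        have hjv : (Finsupp.single j (k + 3)) l = 0 :=
          Finsupp.single_eq_of_ne' (fun hh => hlj hh.symm)
        rw [Finsupp.tsub_apply, hD, hjv] at this
        omega
    rw [hLadd]
    have e1 : L (hs * (MvPowerSeries.monomial (Finsupp.single i (k + 2)) ((k : ℂ) + 3)))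
        = -(((k : ℂ) + 1) * (MvPowerSeries.coeff (Finsupp.single i 1) hs * ((k : ℂ) + 3))) := by
      simp only [hLdef]
      rw [h1, h3]
      ring
    have e2 : L (hs * (MvPowerSeries.monomial (D - Finsupp.single i 1) ((k : ℂ) + 1)))
        = ((k : ℂ) + 3) * (MvPowerSeries.coeff (Finsupp.single i 1) hs * ((k : ℂ) + 1)) := by
      simp only [hLdef]
      rw [h2, Finset.sum_eq_zero fun j _ => h4 j]
      ring
    rw [e1, e2]
    ring
  -- L vanishes on the whole ideal
  have hvanish : ∀ hs : MvPowerSeries (Fin n) ℂ,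
      L (hs * ((fermatPerturbed n (k + 3) (1 : ℂ) : MvPolynomial (Fin n) ℂ) :
        MvPowerSeries (Fin n) ℂ)) = 0 := by
    refine Submodule.span_induction (p := fun x _ => ∀ hs, L (hs * x) = 0)
      ?_ ?_ ?_ ?_ hmem
    · rintro x ⟨i, rfl⟩ hs; exact hgen i hs
    · intro hs
      rw [mul_zero]
      simp [hLdef]
    · intro x y hx hy hpx hpy hs
      rw [mul_add, hLadd, hpx hs, hpy hs, add_zero]
    · intro a x hx hpx hs
      rw [smul_eq_mul, ← mul_assoc]
      exact hpx (hs * a)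
  have hLg0 := hvanish 1
  rw [one_mul] at hLg0
  -- but L g ≠ 0
  have hne : ∀ (j l : Fin n), l ≠ j → Finsupp.single j (k + 3) ≠ D := by
    intro j l hlj heq
    have := Finsupp.ext_iff.mp heq l
    rw [Finsupp.single_apply, if_neg (fun hh => hlj hh.symm), hD] at this
    omega
  have hc1 : MvPowerSeries.coeff D
      ((fermatPerturbed n (k + 3) (1 : ℂ) : MvPolynomial (Fin n) ℂ) :
        MvPowerSeries (Fin n) ℂ) = 1 := by
    rw [MvPolynomial.coeff_coe, hgpoly, MvPolynomial.coeff_add]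
    rw [MvPolynomial.coeff_sum]
    have hz : ∀ j : Fin n, MvPolynomial.coeff D (monomial (Finsupp.single j (k + 3)) (1 : ℂ)) = 0 := by
      intro j
      rw [MvPolynomial.coeff_monomial, if_neg]
      obtain ⟨l, hlj⟩ := exists_ne j
      exact hne j l hlj
    rw [Finset.sum_eq_zero fun j _ => hz j, MvPolynomial.coeff_monomial, if_pos rfl]
    ring
  have hc2 : ∀ j : Fin n, MvPowerSeries.coeff (Finsupp.single j (k + 3))
      ((fermatPerturbed n (k + 3) (1 : ℂ) : MvPolynomial (Fin n) ℂ) :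
        MvPowerSeries (Fin n) ℂ) = 1 := by
    intro j
    rw [MvPolynomial.coeff_coe, hgpoly, MvPolynomial.coeff_add, MvPolynomial.coeff_sum]
    have hsum : ∑ jj : Fin n, MvPolynomial.coeff (Finsupp.single j (k + 3))
        (monomial (Finsupp.single jj (k + 3)) (1 : ℂ)) = 1 := by
      rw [Finset.sum_eq_single j]
      · rw [MvPolynomial.coeff_monomial, if_pos rfl]
      · intro jj _ hjj
        rw [MvPolynomial.coeff_monomial, if_neg]
        intro heq
        have := Finsupp.ext_iff.mp heq jj
        rw [Finsupp.single_eq_same, Finsupp.single_apply, if_neg (fun hh => hjj hh.symm)] at this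
        omega
      · intro habs; exact absurd (Finset.mem_univ j) habs
    rw [hsum, MvPolynomial.coeff_monomial, if_neg]
    · ring
    · obtain ⟨l, hlj⟩ := exists_ne j
      exact fun heq => hne j l hlj heq.symm
  have hLg : L ((fermatPerturbed n (k + 3) (1 : ℂ) : MvPolynomial (Fin n) ℂ) :
      MvPowerSeries (Fin n) ℂ) = ((k : ℂ) + 3) - ((k : ℂ) + 1) * n := by
    simp only [hLdef]
    rw [hc1, Finset.sum_congr rfl fun j _ => hc2 j]
    simp [mul_comm]
  rw [hLg] at hLg0
  have hlt : k + 3 < n * (k + 1) := by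
    have hexp : n * (k + 3) = n * (k + 1) + 2 * n := by ring
    rw [hexp] at h
    omega
  have hne' : ((k : ℂ) + 3) ≠ ((k : ℂ) + 1) * n := by
    have hcast : ((k + 3 : ℕ) : ℂ) ≠ ((n * (k + 1) : ℕ) : ℂ) := by
      exact_mod_cast Nat.ne_of_lt hlt
    intro h0
    apply hcast
    push_cast
    linear_combination h0
  exact hne' (sub_eq_zero.mp hLg0)
end

section
/- Let n ≥ 2 and m ≥ 3 be integers with nm > 2n + m. Then the Fermat polynomial f = x₁^m + ⋯ + xₙ^m is not formally (n(m−2)−1)-determined: there exists a formal power series g ∈ ℂ⟦x₁,…,xₙ⟧ with g − f of order at least n(m−2) such that no ℂ-algebra automorphism φ of ℂ⟦x₁,…,xₙ⟧ satisfies φ(f) = g. -/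
namespace Stmt7Aux

open MvPowerSeries Finsupp
open Finset.HasAntidiagonal (antidiagonal mem_antidiagonal)

variable {n : ℕ}

abbrev R (n : ℕ) := MvPowerSeries (Fin n) ℂ

noncomputable def Dfun (i : Fin n) (h : R n) : R n :=
  fun d => ((d i + 1 : ℕ) : ℂ) * MvPowerSeries.coeff (d + Finsupp.single i 1) h

lemma coeff_Dfun (i : Fin n) (h : R n) (d : Fin n →₀ ℕ) :
    MvPowerSeries.coeff d (Dfun i h) = ((d i + 1 : ℕ) : ℂ) *
      MvPowerSeries.coeff (d + Finsupp.single i 1) h := rfl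

noncomputable def D (i : Fin n) : R n →ₗ[ℂ] R n where
  toFun := Dfun i
  map_add' a b := by
    ext d
    rw [map_add, coeff_Dfun, coeff_Dfun, coeff_Dfun, map_add]
    ring
  map_smul' c a := by
    ext d
    rw [RingHom.id_apply, map_smul, coeff_Dfun, coeff_Dfun, map_smul, smul_eq_mul, smul_eq_mul]
    ring

lemma coeff_D (i : Fin n) (h : R n) (d : Fin n →₀ ℕ) :
    MvPowerSeries.coeff d (D i h) = ((d i + 1 : ℕ) : ℂ) *
      MvPowerSeries.coeff (d + Finsupp.single i 1) h := rfl

lemma D_monomial (i : Fin n) (e : Fin n →₀ ℕ) (c : ℂ) :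
    D i (MvPowerSeries.monomial e c) =
      (e i : ℂ) • MvPowerSeries.monomial (e - Finsupp.single i 1) c := by
  classical
  ext d
  rw [coeff_D, map_smul, smul_eq_mul, MvPowerSeries.coeff_monomial, MvPowerSeries.coeff_monomial]
  split_ifs with h1 h2 h2
  · have : e i = d i + 1 := by
      rw [← h1, Finsupp.add_apply, Finsupp.single_eq_same]
    rw [this]
  · exfalso; apply h2
    rw [← h1, add_tsub_cancel_right]
  · have he : e i = 0 := by
      by_contra hei
      apply h1
      subst h2
      rw [tsub_add_cancel_of_le]
      rw [Finsupp.single_le_iff]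
      omega
    rw [he]
    simp
  · rw [mul_zero, mul_zero]


variable {n : ℕ}

lemma key_sum (i : Fin n) (d : Fin n →₀ ℕ) (F : (Fin n →₀ ℕ) → (Fin n →₀ ℕ) → ℂ) :
    ∑ p ∈ antidiagonal (d + (Finsupp.single i 1 : Fin n →₀ ℕ)), ((p.1 i : ℕ) : ℂ) * F p.1 p.2
    = ∑ q ∈ antidiagonal d, ((q.1 i + 1 : ℕ) : ℂ) * F (q.1 + Finsupp.single i 1) q.2 := by
  classical
  set s := Finsupp.single i 1 with hs
  set emb : ((Fin n →₀ ℕ) × (Fin n →₀ ℕ)) ↪ ((Fin n →₀ ℕ) × (Fin n →₀ ℕ)) :=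
    ⟨fun q => (q.1 + s, q.2), show Function.Injective _ from by
      intro a b hab
      simp only [Prod.mk.injEq] at hab
      exact Prod.ext (add_right_cancel hab.1) hab.2⟩ with hemb
  rw [show ∑ q ∈ antidiagonal d, ((q.1 i + 1 : ℕ) : ℂ) * F (q.1 + s) q.2
      = ∑ p ∈ (antidiagonal d).map emb, ((p.1 i : ℕ) : ℂ) * F p.1 p.2 by
    rw [Finset.sum_map]
    apply Finset.sum_congr rfl
    intro q _
    simp only [hemb, Function.Embedding.coeFn_mk]
    congr 2
    rw [Finsupp.add_apply, hs, Finsupp.single_eq_same]]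
  apply (Finset.sum_subset ?_ ?_).symm
  · intro p hp
    rw [Finset.mem_map] at hp
    obtain ⟨q, hq, rfl⟩ := hp
    rw [mem_antidiagonal] at hq ⊢
    simp only [hemb, Function.Embedding.coeFn_mk]
    rw [add_right_comm, hq]
  · intro p hp hnp
    have hp1 : p.1 i = 0 := by
      by_contra hne
      apply hnp
      rw [Finset.mem_map]
      refine ⟨(p.1 - s, p.2), ?_, ?_⟩
      · rw [mem_antidiagonal] at hp ⊢
        have hle : s ≤ p.1 := by rw [hs, Finsupp.single_le_iff]; omega
        have : (p.1 - s) + p.2 + s = d + s := by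
          rw [add_right_comm, tsub_add_cancel_of_le hle, hp]
        exact add_right_cancel this
      · have hle : s ≤ p.1 := by rw [hs, Finsupp.single_le_iff]; omega
        simp only [hemb, Function.Embedding.coeFn_mk]
        rw [tsub_add_cancel_of_le hle]
    rw [hp1]
    simp

lemma D_mul (i : Fin n) (a b : R n) : D i (a * b) = a * D i b + b * D i a := by
  classical
  ext d
  have step1 : ∀ p ∈ antidiagonal (d + (Finsupp.single i 1 : Fin n →₀ ℕ)),
      ((d i + 1 : ℕ) : ℂ) * (MvPowerSeries.coeff p.1 a * MvPowerSeries.coeff p.2 b)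
      = ((p.1 i : ℕ) : ℂ) * (MvPowerSeries.coeff p.1 a * MvPowerSeries.coeff p.2 b)
        + ((p.2 i : ℕ) : ℂ) * (MvPowerSeries.coeff p.1 a * MvPowerSeries.coeff p.2 b) := by
    intro p hp
    rw [mem_antidiagonal] at hp
    have : p.1 i + p.2 i = d i + 1 := by
      rw [← Finsupp.add_apply, hp, Finsupp.add_apply, Finsupp.single_eq_same]
    rw [← this]
    push_cast
    ring
  have e1 : ∑ p ∈ antidiagonal (d + (Finsupp.single i 1 : Fin n →₀ ℕ)),
      ((p.1 i : ℕ) : ℂ) * (MvPowerSeries.coeff p.1 a * MvPowerSeries.coeff p.2 b)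
      = MvPowerSeries.coeff d (D i a * b) := by
    rw [MvPowerSeries.coeff_mul]
    refine Eq.trans (key_sum i d
      (fun x y => MvPowerSeries.coeff x a * MvPowerSeries.coeff y b)) ?_
    refine Finset.sum_congr rfl fun q _ => ?_
    rw [coeff_D]
    ring
  have e2 : ∑ p ∈ antidiagonal (d + (Finsupp.single i 1 : Fin n →₀ ℕ)),
      ((p.2 i : ℕ) : ℂ) * (MvPowerSeries.coeff p.1 a * MvPowerSeries.coeff p.2 b)
      = MvPowerSeries.coeff d (a * D i b) := by
    rw [MvPowerSeries.coeff_mul]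
    refine Eq.trans (Finsupp.sum_antidiagonal_swap _
      (fun x y => ((y i : ℕ) : ℂ) * (MvPowerSeries.coeff x a * MvPowerSeries.coeff y b))) ?_
    refine Eq.trans (key_sum i d
      (fun x y => MvPowerSeries.coeff y a * MvPowerSeries.coeff x b)) ?_
    refine Eq.trans (Finset.sum_congr rfl (fun (q : (Fin n →₀ ℕ) × (Fin n →₀ ℕ)) _ =>
      show ((q.1 i + 1 : ℕ) : ℂ) * (MvPowerSeries.coeff q.2 a *
          MvPowerSeries.coeff (q.1 + Finsupp.single i 1) b)
        = MvPowerSeries.coeff q.2 a * MvPowerSeries.coeff q.1 (D i b) by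
      rw [coeff_D]; ring)) ?_
    exact Finsupp.sum_antidiagonal_swap _
      (fun x y => MvPowerSeries.coeff y a * MvPowerSeries.coeff x (D i b))
  calc MvPowerSeries.coeff d (D i (a * b))
      = ∑ p ∈ antidiagonal (d + (Finsupp.single i 1 : Fin n →₀ ℕ)),
        ((d i + 1 : ℕ) : ℂ) * (MvPowerSeries.coeff p.1 a * MvPowerSeries.coeff p.2 b) := by
        rw [coeff_D, MvPowerSeries.coeff_mul, Finset.mul_sum]
    _ = _ := by
        rw [Finset.sum_congr rfl step1, Finset.sum_add_distrib, e1, e2, map_add,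
          mul_comm (D i a) b, add_comm]

lemma D_pow (i : Fin n) (y : R n) (k : ℕ) :
    D i (y ^ (k + 1)) = (k + 1 : ℕ) • (y ^ k * D i y) := by
  induction k with
  | zero => simp
  | succ k ih =>
    rw [pow_succ, D_mul, ih, pow_succ]
    push_cast [succ_nsmul]
    ring

noncomputable def repS (h : R n) (i : Fin n) : R n :=
  fun d => if (∀ k, k < i → d k = 0)
    then MvPowerSeries.coeff (d + Finsupp.single i 1) h else 0

lemma coeff_repS (h : R n) (i : Fin n) (d : Fin n →₀ ℕ) :
    MvPowerSeries.coeff d (repS h i) = if (∀ k, k < i → d k = 0)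
      then MvPowerSeries.coeff (d + Finsupp.single i 1) h else 0 := rfl

lemma exists_rep (h : R n) (h0 : MvPowerSeries.constantCoeff h = 0) :
    ∃ s : Fin n → R n, h = ∑ i, MvPowerSeries.X i * s i := by
  classical
  refine ⟨repS h, ?_⟩
  ext e
  rw [map_sum]
  have hterm : ∀ i : Fin n, MvPowerSeries.coeff e (MvPowerSeries.X i * repS h i)
      = if Finsupp.single i 1 ≤ e then
          MvPowerSeries.coeff (e - Finsupp.single i 1) (repS h i) else 0 := by
    intro i
    rw [MvPowerSeries.X_def, MvPowerSeries.coeff_monomial_mul]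
    split_ifs
    · rw [one_mul]
    · rfl
  rw [Finset.sum_congr rfl (fun i _ => hterm i)]
  by_cases he : e = 0
  · subst he
    rw [Finset.sum_eq_zero]
    · exact (h0 ▸ rfl : (0 : ℂ) = MvPowerSeries.coeff (0 : Fin n →₀ ℕ) h).symm
    intro i _
    rw [if_neg]
    rw [Finsupp.single_le_iff]
    simp
  · have hsupp : e.support.Nonempty := by
      rw [Finsupp.support_nonempty_iff]; exact he
    set i₀ := e.support.min' hsupp with hi₀
    have hi₀mem : i₀ ∈ e.support := e.support.min'_mem hsupp
    have hi₀pos : e i₀ ≠ 0 := Finsupp.mem_support_iff.mp hi₀mem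
    have hmin : ∀ k, k < i₀ → e k = 0 := by
      intro k hk
      by_contra hek
      exact absurd (e.support.min'_le k (Finsupp.mem_support_iff.mpr hek)) (not_le.mpr hk)
    rw [Finset.sum_eq_single i₀]
    · rw [if_pos (by rw [Finsupp.single_le_iff]; omega), coeff_repS, if_pos, tsub_add_cancel_of_le
        (by rw [Finsupp.single_le_iff]; omega)]
      intro k hk
      rw [Finsupp.tsub_apply, hmin k hk, Nat.zero_sub]
    · intro i _ hne
      by_cases hle : Finsupp.single i 1 ≤ e
      · rw [if_pos hle, coeff_repS, if_neg]
        intro hall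
        have h1 : 1 ≤ e i := Finsupp.single_le_iff.mp hle
        have hii : i₀ ≤ i := e.support.min'_le i (Finsupp.mem_support_iff.mpr (by omega))
        have hlt : i₀ < i := lt_of_le_of_ne hii (fun hc => hne hc.symm)
        have h2 := hall i₀ hlt
        rw [Finsupp.tsub_apply, Finsupp.single_apply, if_neg (fun hc => hne hc)] at h2
        omega
      · rw [if_neg hle]
    · intro hcon
      exact absurd (Finset.mem_univ i₀) hcon

lemma coeff_single_mul (k : Fin n) (a b : R n)
    (ha : MvPowerSeries.constantCoeff a = 0) :
    MvPowerSeries.coeff (Finsupp.single k 1) (a * b)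
      = MvPowerSeries.coeff (Finsupp.single k 1) a *
        MvPowerSeries.constantCoeff b := by
  classical
  rw [MvPowerSeries.coeff_mul, Finsupp.antidiagonal_single,
    show Finset.HasAntidiagonal.antidiagonal 1 = {(0,1),(1,0)} by decide, Finset.sum_map]
  rw [show ({(0,1),(1,0)} : Finset (ℕ × ℕ)) = insert (0,1) {(1,0)} from rfl]
  rw [Finset.sum_insert (by decide), Finset.sum_singleton]
  simp only [Function.Embedding.coe_prodMap, Function.Embedding.coeFn_mk, Prod.map_apply,
    Finsupp.single_zero]
  rw [show MvPowerSeries.coeff (0 : Fin n →₀ ℕ) a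
      = MvPowerSeries.constantCoeff a from rfl, ha, zero_mul, zero_add]
  rfl

section Helpers

lemma exists_ne' {N : ℕ} (hN : 2 ≤ N) (i : Fin N) : ∃ k, k ≠ i := by
  haveI : Nontrivial (Fin N) := Fin.nontrivial_iff_two_le.mpr hN
  exact exists_ne i

lemma exists_ne_two {N : ℕ} (hN : 3 ≤ N) (i j : Fin N) : ∃ k : Fin N, k ≠ i ∧ k ≠ j := by
  by_contra hc
  push_neg at hc
  have hsub : (Finset.univ : Finset (Fin N)) ⊆ {i, j} := by
    intro k _
    rcases eq_or_ne k i with rfl | hk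
    · simp
    · simp [hc k hk]
  have h1 := Finset.card_le_card hsub
  have h2 : ({i, j} : Finset (Fin N)).card ≤ 2 :=
    (Finset.card_insert_le _ _).trans (by simp)
  rw [Finset.card_univ, Fintype.card_fin] at h1
  omega

end Helpers

theorem stmt_7' (n m : ℕ) (hn : 2 ≤ n) (hm : 3 ≤ m) (h : 2 * n + m < n * m) :
    ∃ g : MvPowerSeries (Fin n) ℂ,
      (∀ d : Fin n →₀ ℕ, (∑ i, d i) < n * (m - 2) →
        MvPowerSeries.coeff d
          (g - ((∑ i, MvPolynomial.X i ^ m : MvPolynomial (Fin n) ℂ) : MvPowerSeries (Fin n) ℂ)) = 0) ∧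
      ¬ ∃ φ : MvPowerSeries (Fin n) ℂ ≃ₐ[ℂ] MvPowerSeries (Fin n) ℂ,
          φ ((∑ i, MvPolynomial.X i ^ m : MvPolynomial (Fin n) ℂ) : MvPowerSeries (Fin n) ℂ) = g := by
  classical
  set δ : Fin n →₀ ℕ := Finsupp.equivFunOnFinite.symm (fun _ => m - 2) with hδdef
  have hδ : ∀ i, δ i = m - 2 := fun i => rfl
  set w : R n := MvPowerSeries.monomial δ 1 with hwdef
  set fP : MvPolynomial (Fin n) ℂ := ∑ i, MvPolynomial.X i ^ m with hfPdef
  have hcoe : ((fP : MvPolynomial (Fin n) ℂ) : R n) = ∑ i, (MvPowerSeries.X i : R n) ^ m := by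
    rw [hfPdef, show ((∑ i, MvPolynomial.X i ^ m : MvPolynomial (Fin n) ℂ) : R n)
      = MvPolynomial.coeToMvPowerSeries.ringHom (∑ i, MvPolynomial.X i ^ m) from rfl, map_sum]
    simp
  refine ⟨(fP : R n) + w, ?_, ?_⟩
  · intro d hd
    rw [add_sub_cancel_left, hwdef, MvPowerSeries.coeff_monomial]
    split_ifs with hdd
    · exfalso
      have hsum : ∑ i, d i = n * (m - 2) := by
        rw [hdd]
        simp only [hδ]
        rw [Finset.sum_const, Finset.card_univ, Fintype.card_fin, smul_eq_mul]
      omega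
    · rfl
  · rintro ⟨φ, hφ⟩
    set y : Fin n → R n := fun i => φ (MvPowerSeries.X i) with hy
    have hg : ∑ i, y i ^ m = (fP : R n) + w := by
      rw [← hφ, hcoe, map_sum]
      exact Finset.sum_congr rfl fun i _ => (map_pow φ _ m).symm
    have hXnu : ∀ i : Fin n, ¬ IsUnit (MvPowerSeries.X i : R n) := by
      intro i hu
      rw [MvPowerSeries.isUnit_iff_constantCoeff, MvPowerSeries.constantCoeff_X] at hu
      exact not_isUnit_zero hu
    have hy0 : ∀ i, MvPowerSeries.constantCoeff (y i) = 0 := by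
      intro i
      by_contra h0
      have hu : IsUnit (y i) :=
        MvPowerSeries.isUnit_iff_constantCoeff.mpr (isUnit_iff_ne_zero.mpr h0)
      have hu2 : IsUnit (φ.symm (y i)) := hu.map φ.symm
      rw [hy] at hu2
      simp only [AlgEquiv.symm_apply_apply] at hu2
      exact hXnu i hu2
    set z : Fin n → R n := fun j => φ.symm (MvPowerSeries.X j) with hz
    have hz0 : ∀ j, MvPowerSeries.constantCoeff (z j) = 0 := by
      intro j
      by_contra h0
      have hu : IsUnit (z j) :=
        MvPowerSeries.isUnit_iff_constantCoeff.mpr (isUnit_iff_ne_zero.mpr h0)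
      have hu2 : IsUnit (φ (z j)) := hu.map (φ : R n ≃ₐ[ℂ] R n)
      rw [hz] at hu2
      simp only [AlgEquiv.apply_symm_apply] at hu2
      exact hXnu j hu2
    choose s hs using fun j => exists_rep (z j) (hz0 j)
    have hXrep : ∀ j, (MvPowerSeries.X j : R n) = ∑ i, y i * φ (s j i) := by
      intro j
      have h1 : φ (z j) = MvPowerSeries.X j := by rw [hz]; exact φ.apply_symm_apply _
      rw [← h1, hs j, map_sum]
      exact Finset.sum_congr rfl fun i _ => by rw [map_mul]
    set L : Matrix (Fin n) (Fin n) ℂ :=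
      Matrix.of (fun i k => MvPowerSeries.coeff (Finsupp.single k 1) (y i)) with hL
    set T : Matrix (Fin n) (Fin n) ℂ :=
      Matrix.of (fun j i => MvPowerSeries.constantCoeff (φ (s j i))) with hT
    have hTL : T * L = 1 := by
      ext j k
      rw [Matrix.mul_apply]
      have hc := congrArg (MvPowerSeries.coeff (Finsupp.single k 1)) (hXrep j)
      rw [map_sum, MvPowerSeries.coeff_X,
        Finset.sum_congr rfl (fun i _ => coeff_single_mul k (y i) (φ (s j i)) (hy0 i))] at hc
      rw [Matrix.one_apply]
      have hiff : (Finsupp.single k 1 = Finsupp.single j 1) ↔ j = k :=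
        ⟨fun he => ((Finsupp.single_left_inj one_ne_zero).mp he).symm, fun he => by rw [he]⟩
      calc ∑ i, T j i * L i k = ∑ i, MvPowerSeries.coeff (Finsupp.single k 1) (y i) *
            MvPowerSeries.constantCoeff (φ (s j i)) := by
            exact Finset.sum_congr rfl fun i _ => mul_comm _ _
        _ = if j = k then 1 else 0 := by
            rw [← hc, if_congr hiff rfl rfl]
    have hdetL : L.det ≠ 0 := by
      intro h0
      have : T.det * L.det = 1 := by rw [← Matrix.det_mul, hTL, Matrix.det_one]
      rw [h0, mul_zero] at this
      exact zero_ne_one this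
    set M : Matrix (Fin n) (Fin n) (R n) := Matrix.of (fun j i => D j (y i)) with hM
    have hMcc : M.map (MvPowerSeries.constantCoeff) = L.transpose := by
      ext j i
      show MvPowerSeries.constantCoeff (D j (y i)) = L i j
      rw [← MvPowerSeries.coeff_zero_eq_constantCoeff_apply, coeff_D]
      simp only [Finsupp.coe_zero, Pi.zero_apply, Nat.cast_ofNat, Nat.cast_one, zero_add,
        Nat.zero_add, Nat.cast_zero]
      norm_num
      rfl
    have hdetM : IsUnit M.det := by
      rw [MvPowerSeries.isUnit_iff_constantCoeff]
      rw [show MvPowerSeries.constantCoeff M.det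
        = (M.map (MvPowerSeries.constantCoeff)).det from
          RingHom.map_det (MvPowerSeries.constantCoeff) M]
      rw [hMcc, Matrix.det_transpose]
      exact isUnit_iff_ne_zero.mpr hdetL
    have hm1 : m - 1 + 1 = m := by omega
    have hDg : ∀ j, D j ((fP : R n) + w) = ∑ i, M j i * ((m : R n) * y i ^ (m - 1)) := by
      intro j
      rw [← hg, map_sum]
      refine Finset.sum_congr rfl fun i _ => ?_
      rw [show y i ^ m = y i ^ ((m - 1) + 1) by rw [hm1], D_pow, hm1, nsmul_eq_mul]
      show (m : R n) * (y i ^ (m-1) * D j (y i)) = D j (y i) * ((m : R n) * y i ^ (m-1))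
      ring
    have hMinv : ∀ i0, (m : R n) * y i0 ^ (m - 1)
        = ∑ j, (M⁻¹) i0 j * D j ((fP : R n) + w) := by
      intro i0
      have h1 : M⁻¹ * M = 1 := Matrix.nonsing_inv_mul M hdetM
      have h2 : ((M⁻¹ * M).mulVec (fun i => (m : R n) * y i ^ (m - 1))) i0
          = (m : R n) * y i0 ^ (m - 1) := by rw [h1, Matrix.one_mulVec]
      rw [← h2, ← Matrix.mulVec_mulVec]
      rw [Matrix.mulVec, dotProduct]
      refine Finset.sum_congr rfl fun j _ => ?_
      congr 1
      rw [Matrix.mulVec, dotProduct, ← hDg j]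
    set c : R n := algebraMap ℂ (R n) ((m : ℂ)⁻¹) with hc
    have hcm : c * (m : R n) = 1 := by
      have hmC : ((m : ℕ) : R n) = algebraMap ℂ (R n) ((m : ℕ) : ℂ) := by
        rw [map_natCast]
      rw [hc, hmC, ← map_mul, inv_mul_cancel₀ (by exact_mod_cast (by omega : m ≠ 0)), map_one]
    set H : Fin n → R n := fun j => ∑ i, y i * (c * (M⁻¹) i j) with hH
    have hgH : (fP : R n) + w = ∑ j, H j * D j ((fP : R n) + w) := by
      calc (fP : R n) + w = ∑ i, y i ^ m := hg.symm
        _ = ∑ i, y i * (c * ((m : R n) * y i ^ (m - 1))) := by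
            refine Finset.sum_congr rfl fun i _ => ?_
            rw [show c * ((m : R n) * y i ^ (m-1)) = (c * (m : R n)) * y i ^ (m-1) by ring,
              hcm, one_mul, ← pow_succ', hm1]
        _ = ∑ i, y i * (c * (∑ j, (M⁻¹) i j * D j ((fP : R n) + w))) := by
            refine Finset.sum_congr rfl fun i _ => ?_
            rw [← hMinv i]
        _ = ∑ j, H j * D j ((fP : R n) + w) := by
            simp_rw [Finset.mul_sum]
            rw [Finset.sum_comm]
            refine Finset.sum_congr rfl fun j _ => ?_
            rw [hH, Finset.sum_mul]
            refine Finset.sum_congr rfl fun i _ => by ring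
    have hDgj : ∀ j, D j ((fP : R n) + w)
        = ((m : ℕ) : ℂ) • MvPowerSeries.monomial (Finsupp.single j (m-1)) (1 : ℂ)
          + ((m - 2 : ℕ) : ℂ) • MvPowerSeries.monomial (δ - Finsupp.single j 1) (1 : ℂ) := by
      intro j
      rw [map_add, hcoe, map_sum]
      congr 1
      · rw [Finset.sum_congr rfl (fun i (_ : i ∈ Finset.univ) => by
          rw [MvPowerSeries.X_pow_eq, D_monomial])]
        rw [Finset.sum_eq_single j]
        · rw [Finsupp.single_eq_same,
            show Finsupp.single j m - Finsupp.single j 1 = Finsupp.single j (m-1) by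
              rw [← Finsupp.single_tsub]]
        · intro i _ hne
          rw [Finsupp.single_apply, if_neg hne]
          simp
        · intro hj; exact absurd (Finset.mem_univ j) hj
      · rw [hwdef, D_monomial, hδ j]
    have hcoeffterm : ∀ (d : Fin n →₀ ℕ) (j : Fin n),
        MvPowerSeries.coeff d (H j * D j ((fP : R n) + w)) =
        ((m : ℕ) : ℂ) * (if Finsupp.single j (m-1) ≤ d then
            MvPowerSeries.coeff (d - Finsupp.single j (m-1)) (H j) else 0)
        + ((m - 2 : ℕ) : ℂ) * (if δ - Finsupp.single j 1 ≤ d then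
            MvPowerSeries.coeff (d - (δ - Finsupp.single j 1)) (H j) else 0) := by
      intro d j
      rw [hDgj j, mul_add, mul_smul_comm, mul_smul_comm, map_add, map_smul, map_smul,
        smul_eq_mul, smul_eq_mul, MvPowerSeries.coeff_mul_monomial,
        MvPowerSeries.coeff_mul_monomial]
      split_ifs <;> ring
    have fact1 : ∀ (i0 j : Fin n), (Finsupp.single j (m-1) ≤ Finsupp.single i0 m) ↔ j = i0 := by
      intro i0 j
      constructor
      · intro hle
        by_contra hne
        have h1 : m - 1 ≤ Finsupp.single i0 m j := Finsupp.single_le_iff.mp hle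
        rw [Finsupp.single_apply, if_neg (fun hc => hne hc.symm)] at h1
        omega
      · rintro rfl
        rw [Finsupp.single_le_iff, Finsupp.single_eq_same]
        omega
    have fact2 : ∀ (i0 j : Fin n), ¬ (δ - Finsupp.single j 1 ≤ Finsupp.single i0 m) := by
      intro i0 j hle
      have hval : ∀ k, (δ - Finsupp.single j 1 : Fin n →₀ ℕ) k
          ≤ (Finsupp.single i0 m : Fin n →₀ ℕ) k :=
        fun k => Finsupp.le_def.mp hle k
      rcases eq_or_ne j i0 with rfl | hne
      · obtain ⟨k, hk⟩ := exists_ne' hn j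
        have h1 := hval k
        rw [Finsupp.tsub_apply, hδ, Finsupp.single_apply, if_neg (fun hc => hk hc.symm),
          Finsupp.single_apply, if_neg (fun hc => hk hc.symm)] at h1
        omega
      · by_cases hm4 : 4 ≤ m
        · have h1 := hval j
          rw [Finsupp.tsub_apply, hδ, Finsupp.single_eq_same,
            Finsupp.single_apply, if_neg (fun hc => hne hc.symm)] at h1
          omega
        · have hm3 : m = 3 := by omega
          have hn4 : 4 ≤ n := by rw [hm3] at h; omega
          obtain ⟨k, hk1, hk2⟩ := exists_ne_two (by omega) i0 j
          have h1 := hval k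
          rw [Finsupp.tsub_apply, hδ, Finsupp.single_apply, if_neg (fun hc => hk2 hc.symm),
            Finsupp.single_apply, if_neg (fun hc => hk1 hc.symm)] at h1
          omega
    have fact3 : ∀ j : Fin n, ¬ (Finsupp.single j (m-1) ≤ δ) := by
      intro j hle
      have h1 : m - 1 ≤ δ j := Finsupp.single_le_iff.mp hle
      rw [hδ] at h1
      omega
    have fact4 : ∀ j : Fin n, δ - Finsupp.single j 1 ≤ δ := fun j => tsub_le_self
    have fact5 : ∀ j : Fin n, δ - (δ - Finsupp.single j 1) = Finsupp.single j 1 := by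
      intro j
      ext k
      rw [Finsupp.tsub_apply, Finsupp.tsub_apply, hδ, Finsupp.single_apply]
      split_ifs <;> omega
    have fact6 : ∀ i0 : Fin n, Finsupp.single i0 m - Finsupp.single i0 (m-1)
        = Finsupp.single i0 1 := by
      intro i0
      rw [← Finsupp.single_tsub, show m - (m - 1) = 1 from by omega]
    have hgc1 : ∀ i0 : Fin n, MvPowerSeries.coeff (Finsupp.single i0 m) ((fP : R n) + w) = 1 := by
      intro i0
      rw [map_add, hcoe, map_sum]
      rw [Finset.sum_congr rfl (fun i (_ : i ∈ Finset.univ) =>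
        MvPowerSeries.coeff_X_pow (Finsupp.single i0 m) i m)]
      rw [Finset.sum_eq_single i0]
      · rw [if_pos rfl, hwdef, MvPowerSeries.coeff_monomial, if_neg, add_zero]
        intro hc
        obtain ⟨k, hk⟩ := exists_ne' hn i0
        have h1 := DFunLike.congr_fun hc k
        rw [Finsupp.single_apply, if_neg (fun hc2 => hk hc2.symm), hδ] at h1
        omega
      · intro i _ hne
        rw [if_neg]
        intro hc
        exact hne ((Finsupp.single_left_inj (by omega : m ≠ 0)).mp hc.symm)
      · intro hj; exact absurd (Finset.mem_univ i0) hj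
    have hgc2 : MvPowerSeries.coeff δ ((fP : R n) + w) = 1 := by
      rw [map_add, hcoe, map_sum]
      rw [Finset.sum_congr rfl (fun i (_ : i ∈ Finset.univ) =>
        MvPowerSeries.coeff_X_pow δ i m)]
      rw [Finset.sum_eq_zero, hwdef, MvPowerSeries.coeff_monomial, if_pos rfl, zero_add]
      intro i _
      rw [if_neg]
      intro hc
      obtain ⟨k, hk⟩ := exists_ne' hn i
      have h1 := DFunLike.congr_fun hc k
      rw [Finsupp.single_apply, if_neg (fun hc2 => hk hc2.symm), hδ] at h1
      omega
    have hA : ∀ i0 : Fin n, ((m : ℕ) : ℂ) *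
        MvPowerSeries.coeff (Finsupp.single i0 1) (H i0) = 1 := by
      intro i0
      have hgc := congrArg (MvPowerSeries.coeff (Finsupp.single i0 m)) hgH
      rw [hgc1 i0, map_sum,
        Finset.sum_congr rfl (fun j (_ : j ∈ Finset.univ) => hcoeffterm (Finsupp.single i0 m) j)]
        at hgc
      have hterm : ∀ j : Fin n,
          ((m : ℕ) : ℂ) * (if Finsupp.single j (m-1) ≤ Finsupp.single i0 m then
            MvPowerSeries.coeff (Finsupp.single i0 m - Finsupp.single j (m-1)) (H j) else 0)
          + ((m - 2 : ℕ) : ℂ) * (if δ - Finsupp.single j 1 ≤ Finsupp.single i0 m then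
            MvPowerSeries.coeff (Finsupp.single i0 m - (δ - Finsupp.single j 1)) (H j) else 0)
          = if j = i0 then
              ((m : ℕ) : ℂ) * MvPowerSeries.coeff (Finsupp.single i0 1) (H i0) else 0 := by
        intro j
        rcases eq_or_ne j i0 with rfl | hne
        · rw [if_pos rfl, if_pos ((fact1 j j).mpr rfl), if_neg (fact2 j j), fact6, mul_zero,
            add_zero]
        · rw [if_neg hne, if_neg (fun hc => hne ((fact1 i0 j).mp hc)), if_neg (fact2 i0 j),
            mul_zero, mul_zero, add_zero]
      rw [Finset.sum_congr rfl (fun j _ => hterm j), Finset.sum_ite_eq' Finset.univ i0,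
        if_pos (Finset.mem_univ i0)] at hgc
      exact hgc.symm
    have hB : (1 : ℂ) = ((m - 2 : ℕ) : ℂ) * ((n : ℂ) * ((m : ℂ))⁻¹) := by
      have hgc := congrArg (MvPowerSeries.coeff δ) hgH
      rw [hgc2, map_sum, Finset.sum_congr rfl (fun j (_ : j ∈ Finset.univ) => hcoeffterm δ j)]
        at hgc
      have hmne : (m : ℂ) ≠ 0 := by
        exact_mod_cast (by omega : (m : ℕ) ≠ 0)
      have hHj : ∀ j : Fin n, MvPowerSeries.coeff (Finsupp.single j 1) (H j)
          = ((m : ℂ))⁻¹ := by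
        intro j
        have := hA j
        field_simp at this ⊢
        linear_combination this
      have hterm : ∀ j : Fin n,
          ((m : ℕ) : ℂ) * (if Finsupp.single j (m-1) ≤ δ then
            MvPowerSeries.coeff (δ - Finsupp.single j (m-1)) (H j) else 0)
          + ((m - 2 : ℕ) : ℂ) * (if δ - Finsupp.single j 1 ≤ δ then
            MvPowerSeries.coeff (δ - (δ - Finsupp.single j 1)) (H j) else 0)
          = ((m - 2 : ℕ) : ℂ) * ((m : ℂ))⁻¹ := by
        intro j
        rw [if_neg (fact3 j), if_pos (fact4 j), fact5, hHj j, mul_zero, zero_add]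
      rw [Finset.sum_congr rfl (fun j _ => hterm j), Finset.sum_const, Finset.card_univ,
        Fintype.card_fin, nsmul_eq_mul] at hgc
      rw [hgc]
      ring
    -- final numeric contradiction
    have hmne : (m : ℂ) ≠ 0 := by exact_mod_cast (by omega : (m : ℕ) ≠ 0)
    have hC : ((m : ℕ) : ℂ) = (((m - 2) * n : ℕ) : ℂ) := by
      push_cast [Nat.cast_mul]
      field_simp at hB
      linear_combination hB
    have hnat : m = (m - 2) * n := Nat.cast_inj.mp hC
    have hexp : (m - 2) * n + 2 * n = m * n := by
      rw [← Nat.add_mul, show m - 2 + 2 = m from by omega]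
    rw [mul_comm n m] at h
    omega
end Stmt7Aux

open MvPolynomial

/-- For integers `n ≥ 2`, `m ≥ 3` with `nm > 2n + m`, the Fermat polynomial
`f = x₁^m + ⋯ + xₙ^m` is not formally `(n(m−2)−1)`-determined: there is a formal power
series `g` with `g − f` of order at least `n(m−2)` such that no `ℂ`-algebra automorphism
`φ` of `ℂ⟦x₁,…,xₙ⟧` satisfies `φ(f) = g`. -/
theorem stmt_7 (n m : ℕ) (hn : 2 ≤ n) (hm : 3 ≤ m) (h : 2 * n + m < n * m) :
    ∃ g : MvPowerSeries (Fin n) ℂ,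
      (∀ d : Fin n →₀ ℕ, (∑ i, d i) < n * (m - 2) →
        MvPowerSeries.coeff d
          (g - ((∑ i, X i ^ m : MvPolynomial (Fin n) ℂ) : MvPowerSeries (Fin n) ℂ)) = 0) ∧
      ¬ ∃ φ : MvPowerSeries (Fin n) ℂ ≃ₐ[ℂ] MvPowerSeries (Fin n) ℂ,
          φ ((∑ i, X i ^ m : MvPolynomial (Fin n) ℂ) : MvPowerSeries (Fin n) ℂ) = g := by
  exact Stmt7Aux.stmt_7' n m hn hm h
end
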